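/- arXiv:cs/0702056 — 3 statements merged into one kernel-verified Lean document; each statement's English description precedes it below -/
import Mathlib

section
/- For the Poisson model, E(H_{N_x}) = E( Σ_{i=0}^{∞} (1/π_i) · 1_{{t_1 > α_i x, t_2 ≤ (α_i + π_i) x}} ), where N_x is the number of points of a rate-1 Poisson process in [0,x], t_1 < t_2 are its first two points, and (π_i, α_i) are as defined from the i.i.d. sequence (A_j, B_j) independent of the Poisson process. -/
open Finset MeasureTheory ProbabilityTheory

/-- `π_i = Π_{j<i} a_j`. -/
noncomputable def prodSeq (a : ℕ → ℝ) (i : ℕ) : ℝ := ∏ j ∈ Finset.range i, a j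

/-- `α_i = Σ_{j<i} π_j b_j`. -/
noncomputable def alphaSeq (a b : ℕ → ℝ) (i : ℕ) : ℝ :=
  ∑ j ∈ Finset.range i, prodSeq a j * b j

/-- basic kernel function -/
noncomputable def psiF (a c y : ℝ) : ℝ :=
  Real.exp (-(a*y)) - Real.exp (-((a+c)*y)) * (1 + c*y)

noncomputable def sFun (p q : ℝ) : ℕ → ℝ → ℝ
  | 0, y => psiF 0 1 y
  | (i+1), y => sFun p q i (p*y) + Real.exp (-(p*y)) * sFun p q i (q*y)

lemma expIneq {z : ℝ} (hz : 0 ≤ z) :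
    Real.exp (-z) * (1+z) ≤ 1 ∧ 1 - Real.exp (-z) * (1+z) ≤ z^2 := by
  have h1 := Real.add_one_le_exp z
  have h2 := Real.add_one_le_exp (-z)
  have h3 : Real.exp (-z) * Real.exp z = 1 := by
    rw [← Real.exp_add]; simp
  have h4 := Real.exp_pos (-z)
  have h5 := Real.exp_pos z
  constructor
  · nlinarith
  · nlinarith

lemma psiF_eq (a c y : ℝ) :
    psiF a c y = Real.exp (-(a*y)) * (1 - Real.exp (-(c*y)) * (1 + c*y)) := by
  unfold psiF
  rw [show -((a+c)*y) = -(a*y) + -(c*y) by ring, Real.exp_add]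
  ring

lemma psiF_nonneg {a c y : ℝ} (hc : 0 ≤ c) (hy : 0 ≤ y) : 0 ≤ psiF a c y := by
  rw [psiF_eq]
  have h := (expIneq (mul_nonneg hc hy)).1
  have := (Real.exp_pos (-(a*y))).le
  nlinarith

lemma psiF_le {a c y : ℝ} (ha : 0 ≤ a) (hc : 0 ≤ c) (hy : 0 ≤ y) :
    psiF a c y ≤ c^2 * y^2 := by
  rw [psiF_eq]
  have h := (expIneq (mul_nonneg hc hy)).2
  have h2 : Real.exp (-(a*y)) ≤ 1 := by
    rw [Real.exp_le_one_iff]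
    simp [mul_nonneg ha hy]
  have h3 := (expIneq (mul_nonneg hc hy)).1
  nlinarith [(Real.exp_pos (-(a*y))).le]

lemma sFun_nonneg {p q : ℝ} (hp : 0 ≤ p) (hq : 0 ≤ q) :
    ∀ i y, 0 ≤ y → 0 ≤ sFun p q i y := by
  intro i
  induction i with
  | zero => intro y hy; exact psiF_nonneg zero_le_one hy
  | succ i ih =>
    intro y hy
    have h1 := ih (p*y) (mul_nonneg hp hy)
    have h2 := ih (q*y) (mul_nonneg hq hy)
    have := (Real.exp_pos (-(p*y))).le
    show 0 ≤ sFun p q i (p*y) + Real.exp (-(p*y)) * sFun p q i (q*y)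
    nlinarith

lemma sFun_le {p q : ℝ} (hp : 0 ≤ p) (hq : 0 ≤ q) :
    ∀ i y, 0 ≤ y → sFun p q i y ≤ (p^2+q^2)^i * y^2 := by
  intro i
  induction i with
  | zero => intro y hy; simpa [sFun] using psiF_le le_rfl zero_le_one hy
  | succ i ih =>
    intro y hy
    have h1 := ih (p*y) (mul_nonneg hp hy)
    have h2 := ih (q*y) (mul_nonneg hq hy)
    have h2' := sFun_nonneg hp hq i (q*y) (mul_nonneg hq hy)
    have he : Real.exp (-(p*y)) ≤ 1 := by
      rw [Real.exp_le_one_iff]; simp [mul_nonneg hp hy]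
    have he' := (Real.exp_pos (-(p*y))).le
    show sFun p q i (p*y) + Real.exp (-(p*y)) * sFun p q i (q*y) ≤ (p^2+q^2)^(i+1) * y^2
    have hr : (0:ℝ) ≤ (p^2+q^2)^i := by positivity
    calc sFun p q i (p*y) + Real.exp (-(p*y)) * sFun p q i (q*y)
        ≤ (p^2+q^2)^i * (p*y)^2 + 1 * ((p^2+q^2)^i * (q*y)^2) := by
          have : Real.exp (-(p*y)) * sFun p q i (q*y) ≤ 1 * ((p^2+q^2)^i * (q*y)^2) := by
            nlinarith
          linarith
      _ = (p^2+q^2)^(i+1) * y^2 := by ring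

lemma prodSeq_congr {a a' : ℕ → ℝ} {i : ℕ} (h : ∀ j < i, a j = a' j) :
    prodSeq a i = prodSeq a' i :=
  Finset.prod_congr rfl fun j hj => h j (Finset.mem_range.1 hj)

lemma alphaSeq_congr {a a' b b' : ℕ → ℝ} {i : ℕ} (ha : ∀ j < i, a j = a' j)
    (hb : ∀ j < i, b j = b' j) : alphaSeq a b i = alphaSeq a' b' i := by
  refine Finset.sum_congr rfl fun j hj => ?_
  have hj' := Finset.mem_range.1 hj
  rw [prodSeq_congr (fun k hk => ha k (hk.trans hj')), hb j hj']

lemma prodSeq_zero (a : ℕ → ℝ) : prodSeq a 0 = 1 := by simp [prodSeq]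

lemma prodSeq_succ' (a : ℕ → ℝ) (i : ℕ) :
    prodSeq a (i+1) = a 0 * prodSeq (fun j => a (j+1)) i := by
  simp [prodSeq, Finset.prod_range_succ', mul_comm]

lemma alphaSeq_succ' (a b : ℕ → ℝ) (i : ℕ) :
    alphaSeq a b (i+1) = b 0 + a 0 * alphaSeq (fun j => a (j+1)) (fun j => b (j+1)) i := by
  unfold alphaSeq
  rw [Finset.sum_range_succ', prodSeq_zero, one_mul, Finset.mul_sum, add_comm]
  congr 1
  exact Finset.sum_congr rfl fun j _ => by rw [prodSeq_succ']; ring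

/-- extension of a finite boolean string by `false`. -/
def extB {i : ℕ} (v : Fin i → Bool) : ℕ → Bool :=
  fun j => if h : j < i then v ⟨j, h⟩ else false

noncomputable def aOf (p q : ℝ) (b : Bool) : ℝ := if b then q else p
noncomputable def bOf (p : ℝ) (b : Bool) : ℝ := if b then p else 0

lemma extB_cons_zero {i : ℕ} (b : Bool) (w : Fin i → Bool) :
    extB (Fin.cons b w) 0 = b := by simp [extB]

lemma extB_cons_succ {i : ℕ} (b : Bool) (w : Fin i → Bool) (j : ℕ) :
    extB (Fin.cons b w) (j+1) = extB w j := by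
  by_cases h : j < i
  · have h' : j + 1 < i + 1 := Nat.succ_lt_succ h
    simp only [extB, dif_pos h, dif_pos h']
    exact @Fin.cons_succ i (fun _ => Bool) b w ⟨j, h⟩
  · have h' : ¬ (j + 1 < i + 1) := fun hc => h (Nat.lt_of_succ_lt_succ hc)
    simp [extB, h, h']

noncomputable def piStr (p q : ℝ) {i : ℕ} (v : Fin i → Bool) : ℝ :=
  prodSeq (fun j => aOf p q (extB v j)) i

noncomputable def alStr (p q : ℝ) {i : ℕ} (v : Fin i → Bool) : ℝ :=
  alphaSeq (fun j => aOf p q (extB v j)) (fun j => bOf p (extB v j)) i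

lemma piStr_cons (p q : ℝ) {i : ℕ} (b : Bool) (w : Fin i → Bool) :
    piStr p q (Fin.cons b w) = aOf p q b * piStr p q w := by
  unfold piStr
  rw [prodSeq_succ']
  congr 1
  · exact prodSeq_congr fun j _ => by rw [extB_cons_succ]

lemma alStr_cons (p q : ℝ) {i : ℕ} (b : Bool) (w : Fin i → Bool) :
    alStr p q (Fin.cons b w) = bOf p b + aOf p q b * alStr p q w := by
  unfold alStr
  rw [alphaSeq_succ']
  congr 1
  · congr 1
    exact alphaSeq_congr (fun j _ => by rw [extB_cons_succ]) (fun j _ => by rw [extB_cons_succ])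

lemma piStr_pos {p q : ℝ} (hp : 0 < p) (hq : 0 < q) {i : ℕ} (v : Fin i → Bool) :
    0 < piStr p q v := by
  unfold piStr prodSeq
  refine Finset.prod_pos fun j _ => ?_
  unfold aOf; cases h : extB v j <;> simp [h, hp, hq]

lemma alStr_nonneg {p q : ℝ} (hp : 0 ≤ p) (hq : 0 ≤ q) {i : ℕ} (v : Fin i → Bool) :
    0 ≤ alStr p q v := by
  unfold alStr alphaSeq prodSeq
  refine Finset.sum_nonneg fun j _ => mul_nonneg (Finset.prod_nonneg fun k _ => ?_) ?_
  · unfold aOf; cases h : extB v k <;> simp [h, hp, hq]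
  · unfold bOf; cases h : extB v j <;> simp [h, hp]

section strSums
variable (p q : ℝ)
lemma psiF_scale (t a c y : ℝ) : psiF (t*a) (t*c) y = psiF a c (t*y) := by
  unfold psiF
  rw [show -(t*a*y) = -(a*(t*y)) by ring, show -((t*a+t*c)*y) = -((a+c)*(t*y)) by ring,
    show t*c*y = c*(t*y) by ring]

lemma psiF_shift (u a c y : ℝ) : psiF (u + a) c y = Real.exp (-(u*y)) * psiF a c y := by
  unfold psiF
  rw [show -((u+a)*y) = -(u*y) + -(a*y) by ring,
    show -((u+a+c)*y) = -(u*y) + -((a+c)*y) by ring, Real.exp_add, Real.exp_add]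
  ring

lemma sumPsi : ∀ i y, (∑ v : Fin i → Bool, psiF (alStr p q v) (piStr p q v) y)
    = sFun p q i y := by
  intro i
  induction i with
  | zero =>
    intro y
    rw [Fintype.sum_unique]
    show psiF (alStr p q (default : Fin 0 → Bool)) (piStr p q (default : Fin 0 → Bool)) y
      = psiF 0 1 y
    have h1 : alStr p q (default : Fin 0 → Bool) = 0 := by
      simp [alStr, alphaSeq]
    have h2 : piStr p q (default : Fin 0 → Bool) = 1 := by
      simp [piStr, prodSeq]
    rw [h1, h2]
  | succ i ih =>
    intro y
    have hcomp := Equiv.sum_comp (Fin.consEquiv (fun _ : Fin (i+1) => Bool))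
      (fun v => psiF (alStr p q v) (piStr p q v) y)
    rw [← hcomp]
    have hfun : ∀ z : Bool × (Fin i → Bool),
        (Fin.consEquiv (fun _ : Fin (i+1) => Bool)) z = Fin.cons z.1 z.2 := fun z => rfl
    simp only [hfun]
    rw [Fintype.sum_prod_type, Fintype.sum_bool]
    show (∑ w : Fin i → Bool, psiF (alStr p q (Fin.cons true w)) (piStr p q (Fin.cons true w)) y)
      + (∑ w : Fin i → Bool, psiF (alStr p q (Fin.cons false w)) (piStr p q (Fin.cons false w)) y)
      = sFun p q i (p*y) + Real.exp (-(p*y)) * sFun p q i (q*y)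
    rw [add_comm]
    congr 1
    · rw [← ih (p*y)]
      refine Finset.sum_congr rfl fun w _ => ?_
      rw [alStr_cons, piStr_cons]
      show psiF (0 + p * alStr p q w) (p * piStr p q w) y = _
      rw [zero_add, psiF_scale]
    · rw [← ih (q*y), Finset.mul_sum]
      refine Finset.sum_congr rfl fun w _ => ?_
      rw [alStr_cons, piStr_cons]
      show psiF (p + q * alStr p q w) (q * piStr p q w) y = _
      rw [psiF_shift, psiF_scale]

end strSums

noncomputable def TFun (p q : ℝ) (F : ℝ → ℝ) : ℕ → ℝ → ℝ
  | 0, y => F y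
  | (N+1), y => TFun p q F N (p*y) + Real.exp (-(p*y)) * TFun p q F N (q*y)

lemma exp_tsum (z : ℝ) : Real.exp z = ∑' n : ℕ, z^n / n.factorial := by
  rw [Real.exp_eq_exp_ℝ]
  exact congrFun NormedSpace.exp_eq_tsum_div z

section EHbounds
variable {p q : ℝ} {EH : ℕ → ℝ}

lemma EH_bounds (hp : 0 < p) (hq : 0 < q) (hpq : p + q = 1)
    (hEH0 : EH 0 = 0) (hEH1 : EH 1 = 0)
    (hrec : ∀ n, 2 ≤ n →
      EH n = 1 + (∑ k ∈ range (n + 1), (n.choose k : ℝ) * p ^ k * q ^ (n - k) * EH k)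
        + q ^ n * EH n) :
    ∀ n, 0 ≤ EH n ∧ EH n ≤ (1/(p*q))^n := by
  have hp1 : p < 1 := by linarith
  have hq1 : q < 1 := by linarith
  have hK1 : 1 ≤ 1/(p*q) := by
    rw [le_div_iff₀ (by positivity : (0:ℝ) < p*q)]
    nlinarith
  intro n
  induction n using Nat.strong_induction_on with
  | _ n ih =>
    match n, ih with
    | 0, _ => simp [hEH0]
    | 1, _ => constructor <;> simp [hEH1] <;> positivity
    | (m+2), ih =>
      set n := m + 2 with hn
      set K := 1/(p*q) with hKdef
      have hn2 : 2 ≤ n := by omega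
      have e := hrec n hn2
      rw [Finset.sum_range_succ] at e
      simp only [Nat.choose_self, Nat.sub_self, pow_zero, Nat.cast_one, one_mul, mul_one] at e
      -- e : EH n = 1 + (S' + p^n * EH n) + q^n * EH n  (roughly)
      set S' := ∑ k ∈ range n, (n.choose k : ℝ) * p ^ k * q ^ (n - k) * EH k with hS'
      have heq : EH n * (1 - p^n - q^n) = 1 + S' := by
        nlinarith [e]
      have hS'0 : 0 ≤ S' := by
        refine Finset.sum_nonneg fun k hk => ?_
        have hk' := (ih k (Finset.mem_range.1 hk)).1
        positivity
      have hS'le : S' ≤ K^(m+1) := by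
        have h1 : S' ≤ ∑ k ∈ range n, (n.choose k : ℝ) * p ^ k * q ^ (n - k) * K^(m+1) := by
          refine Finset.sum_le_sum fun k hk => ?_
          have hkm := Finset.mem_range.1 hk
          have h2 := (ih k hkm).2
          have h3 : (1/(p*q))^k ≤ K^(m+1) := by
            rw [← hKdef]
            exact pow_le_pow_right₀ hK1 (by omega)
          have h4 : (0:ℝ) ≤ (n.choose k : ℝ) * p ^ k * q ^ (n - k) := by positivity
          calc (n.choose k : ℝ) * p ^ k * q ^ (n - k) * EH k
              ≤ (n.choose k : ℝ) * p ^ k * q ^ (n - k) * ((1/(p*q))^k) := by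
                exact mul_le_mul_of_nonneg_left ((ih k hkm).2) h4
            _ ≤ (n.choose k : ℝ) * p ^ k * q ^ (n - k) * K^(m+1) :=
                mul_le_mul_of_nonneg_left h3 h4
        have h2 : ∑ k ∈ range n, (n.choose k : ℝ) * p ^ k * q ^ (n - k) * K^(m+1)
            ≤ ∑ k ∈ range (n+1), (n.choose k : ℝ) * p ^ k * q ^ (n - k) * K^(m+1) := by
          refine Finset.sum_le_sum_of_subset_of_nonneg
            (Finset.range_subset_range.2 (Nat.le_succ n)) fun k _ _ => by positivity
        have h3 : ∑ k ∈ range (n+1), (n.choose k : ℝ) * p ^ k * q ^ (n - k) * K^(m+1)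
            = (p+q)^n * K^(m+1) := by
          rw [add_pow, Finset.sum_mul]
          refine Finset.sum_congr rfl fun k _ => by ring
        rw [h3, hpq, one_pow, one_mul] at h2
        linarith
      have hc : 2*(p*q) ≤ 1 - p^n - q^n := by
        have h1 : p^n ≤ p^2 := pow_le_pow_of_le_one hp.le hp1.le hn2
        have h2 : q^n ≤ q^2 := pow_le_pow_of_le_one hq.le hq1.le hn2
        nlinarith
      have hcpos : (0:ℝ) < 1 - p^n - q^n := by nlinarith
      have heq' : EH n = (1 + S')/(1 - p^n - q^n) := by
        rw [eq_div_iff (ne_of_gt hcpos)]; exact heq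
      have hEHn0 : 0 ≤ EH n := by
        rw [heq']; exact div_nonneg (by linarith) hcpos.le
      refine ⟨hEHn0, ?_⟩
      have hKm1 : (1:ℝ) ≤ K^(m+1) := by
        calc (1:ℝ) = 1^(m+1) := (one_pow _).symm
          _ ≤ K^(m+1) := pow_le_pow_left₀ zero_le_one hK1 _
      have h2 : EH n * (2*(p*q)) ≤ 2*K^(m+1) := by
        have ha : EH n * (2*(p*q)) ≤ EH n * (1 - p^n - q^n) := by nlinarith [hc, hEHn0]
        rw [heq] at ha
        linarith
      have hKn : K^n = K^(m+1) * K := by rw [hn, pow_succ]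
      have hpq0 : (0:ℝ) < p*q := by positivity
      have hKpos : (0:ℝ) < K := by rw [hKdef]; positivity
      have h3 := mul_le_mul_of_nonneg_right h2 hKpos.le
      have h4 : EH n * (2*(p*q)) * K = 2 * EH n := by
        rw [hKdef]; field_simp
      rw [hKn]
      rw [h4] at h3
      linarith
end EHbounds

section FunEq
variable {p q K : ℝ} {EH : ℕ → ℝ}

lemma summable_norm_EH (hb : ∀ n, 0 ≤ EH n ∧ EH n ≤ K^n) (hK : 0 ≤ K) (y : ℝ) :
    Summable fun n => ‖EH n * y^n / n.factorial‖ := by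
  refine Summable.of_nonneg_of_le (fun n => norm_nonneg _) (fun n => ?_)
    (Real.summable_pow_div_factorial (K*|y|))
  rw [Real.norm_eq_abs, abs_div, abs_mul, abs_pow, Nat.abs_cast, abs_of_nonneg (hb n).1, mul_pow]
  gcongr
  exact (hb n).2

lemma summable_EH (hb : ∀ n, 0 ≤ EH n ∧ EH n ≤ K^n) (hK : 0 ≤ K) (y : ℝ) :
    Summable fun n => EH n * y^n / n.factorial :=
  (summable_norm_EH hb hK y).of_norm

/-- the `G`-version of the functional equation. -/
lemma funEq_mul (hb : ∀ n, 0 ≤ EH n ∧ EH n ≤ K^n) (hK : 0 ≤ K)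
    (hEH0 : EH 0 = 0) (hEH1 : EH 1 = 0)
    (hrec : ∀ n, 2 ≤ n →
      EH n = 1 + (∑ k ∈ range (n + 1), (n.choose k : ℝ) * p ^ k * q ^ (n - k) * EH k)
        + q ^ n * EH n) (y : ℝ) :
    (∑' n : ℕ, EH n * y^n / n.factorial)
      = (Real.exp y - 1 - y)
        + (∑' n : ℕ, EH n * (p*y)^n / n.factorial) * Real.exp (q*y)
        + (∑' n : ℕ, EH n * (q*y)^n / n.factorial) := by
  classical
  set f : ℕ → ℝ := fun k => EH k * (p*y)^k / k.factorial with hf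
  set g : ℕ → ℝ := fun m => (q*y)^m / m.factorial with hg
  have hgnorm : Summable fun m => ‖g m‖ := by
    refine Summable.of_nonneg_of_le (fun n => norm_nonneg _) (fun n => ?_)
      (Real.summable_pow_div_factorial |q*y|)
    rw [hg, Real.norm_eq_abs, abs_div, abs_pow, Nat.abs_cast]
  have hfnorm : Summable fun k => ‖f k‖ := summable_norm_EH hb hK (p*y)
  have hCauchy : (∑' n, f n) * (∑' n, g n)
      = ∑' n, ∑ k ∈ range (n+1), f k * g (n-k) :=
    tsum_mul_tsum_eq_tsum_sum_range_of_summable_norm hfnorm hgnorm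
  have hexpg : (∑' n, g n) = Real.exp (q*y) := (exp_tsum (q*y)).symm
  -- coefficient identity
  have hcoeff : ∀ n : ℕ, EH n * y^n / n.factorial
      = (if 2 ≤ n then y^n / (n.factorial:ℝ) else 0)
        + (∑ k ∈ range (n+1), f k * g (n-k)) + EH n * (q*y)^n / n.factorial := by
    intro n
    match n with
    | 0 => simp [hf, hg, hEH0]
    | 1 => simp [hf, hg, hEH0, hEH1, Finset.sum_range_succ]
    | (m+2) =>
      set n := m + 2 with hn
      have hn2 : 2 ≤ n := by omega
      rw [if_pos hn2]
      have e := hrec n hn2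
      have hmid : (∑ k ∈ range (n+1), (n.choose k : ℝ) * p ^ k * q ^ (n - k) * EH k) * y^n / (n.factorial:ℝ)
          = ∑ k ∈ range (n+1), f k * g (n-k) := by
        rw [Finset.sum_mul, Finset.sum_div]
        refine Finset.sum_congr rfl fun k hk => ?_
        have hkn : k ≤ n := by
          have := Finset.mem_range.1 hk; omega
        have hcf : (n.choose k : ℝ) * k.factorial * (n-k).factorial = n.factorial := by
          exact_mod_cast congrArg (Nat.cast (R := ℝ)) (Nat.choose_mul_factorial_mul_factorial hkn)
        have hy2 : y^2 * y^m = y^k * y^(n-k) := by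
          rw [← pow_add, ← pow_add]; congr 1; omega
        have hk0 : (k.factorial:ℝ) ≠ 0 := Nat.cast_ne_zero.2 k.factorial_ne_zero
        have hnk0 : ((n-k).factorial:ℝ) ≠ 0 := Nat.cast_ne_zero.2 (n-k).factorial_ne_zero
        have hn0 : (n.factorial:ℝ) ≠ 0 := Nat.cast_ne_zero.2 n.factorial_ne_zero
        rw [hf, hg]
        field_simp
        rw [mul_pow, mul_pow]
        linear_combination (EH k * p^k * q^(n-k) * (y^k * y^(n-k))) * hcf
          + ((n.choose k : ℝ) * p^k * q^(n-k) * EH k * (k.factorial:ℝ)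
              * ((n-k).factorial:ℝ)) * hy2
      rw [← hmid]
      have hq : q^n * EH n * y^n / (n.factorial:ℝ) = EH n * (q*y)^n / n.factorial := by
        rw [mul_pow]; ring
      conv_lhs => rw [e]
      rw [mul_pow]
      field_simp
  -- summability of the three pieces
  have hs_if : Summable fun n : ℕ => (if 2 ≤ n then y^n / (n.factorial:ℝ) else 0) := by
    refine Summable.of_norm (Summable.of_nonneg_of_le (fun n => norm_nonneg _) (fun n => ?_)
      (Real.summable_pow_div_factorial |y|))
    by_cases h : 2 ≤ n
    · rw [if_pos h, Real.norm_eq_abs, abs_div, abs_pow, Nat.abs_cast]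
    · rw [if_neg h, norm_zero]; positivity
  have hs_cauchy : Summable fun n => ∑ k ∈ range (n+1), f k * g (n-k) :=
    (summable_norm_sum_mul_range_of_summable_norm hfnorm hgnorm).of_norm
  have hs_q : Summable fun n => EH n * (q*y)^n / (n.factorial:ℝ) := summable_EH hb hK (q*y)
  have hif_val : (∑' n : ℕ, (if 2 ≤ n then y^n / (n.factorial:ℝ) else 0))
      = Real.exp y - 1 - y := by
    have hsy := Real.summable_pow_div_factorial y
    have h2 := Summable.sum_add_tsum_nat_add (f := fun n : ℕ => y^n/(n.factorial:ℝ)) 2 hsy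
    have h3 := Summable.sum_add_tsum_nat_add
      (f := fun n : ℕ => (if 2 ≤ n then y^n / (n.factorial:ℝ) else 0)) 2 hs_if
    have h4 : (∑' i : ℕ, (if 2 ≤ i + 2 then y^(i+2) / ((i+2).factorial:ℝ) else 0))
        = ∑' i : ℕ, y^(i+2)/((i+2).factorial:ℝ) :=
      tsum_congr fun i => if_pos (by omega)
    have h5 : (∑ i ∈ range 2, (if 2 ≤ i then y^i / (i.factorial:ℝ) else 0)) = 0 := by
      simp [Finset.sum_range_succ]
    have h6 : (∑ i ∈ range 2, y^i/(i.factorial:ℝ)) = 1 + y := by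
      simp [Finset.sum_range_succ]
    have h7 : Real.exp y = ∑' n : ℕ, y^n / (n.factorial:ℝ) := exp_tsum y
    rw [h5, h4] at h3
    rw [h6] at h2
    rw [← h3] at *
    linarith
  calc (∑' n : ℕ, EH n * y^n / n.factorial)
      = ∑' n : ℕ, ((if 2 ≤ n then y^n / (n.factorial:ℝ) else 0)
        + (∑ k ∈ range (n+1), f k * g (n-k)) + EH n * (q*y)^n / n.factorial) :=
        tsum_congr hcoeff
    _ = (∑' n : ℕ, (if 2 ≤ n then y^n / (n.factorial:ℝ) else 0))
        + (∑' n : ℕ, ∑ k ∈ range (n+1), f k * g (n-k))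
        + (∑' n : ℕ, EH n * (q*y)^n / (n.factorial:ℝ)) := by
        rw [Summable.tsum_add (hs_if.add hs_cauchy) hs_q, Summable.tsum_add hs_if hs_cauchy]
    _ = (Real.exp y - 1 - y)
        + (∑' n : ℕ, EH n * (p*y)^n / n.factorial) * Real.exp (q*y)
        + (∑' n : ℕ, EH n * (q*y)^n / n.factorial) := by
        rw [hif_val, ← hCauchy, hexpg]
end FunEq

section Tele
variable {p q K : ℝ} {EH : ℕ → ℝ}

lemma funEqF (hpq : p + q = 1) (hb : ∀ n, 0 ≤ EH n ∧ EH n ≤ K^n) (hK : 0 ≤ K)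
    (hEH0 : EH 0 = 0) (hEH1 : EH 1 = 0)
    (hrec : ∀ n, 2 ≤ n →
      EH n = 1 + (∑ k ∈ range (n + 1), (n.choose k : ℝ) * p ^ k * q ^ (n - k) * EH k)
        + q ^ n * EH n) (y : ℝ) :
    (∑' n : ℕ, EH n * y^n / n.factorial * Real.exp (-y))
      = psiF 0 1 y + ((∑' n : ℕ, EH n * (p*y)^n / n.factorial * Real.exp (-(p*y)))
        + Real.exp (-(p*y)) * (∑' n : ℕ, EH n * (q*y)^n / n.factorial * Real.exp (-(q*y)))) := by
  rw [tsum_mul_right, tsum_mul_right, tsum_mul_right, funEq_mul hb hK hEH0 hEH1 hrec y]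
  have h1 : Real.exp y * Real.exp (-y) = 1 := by rw [← Real.exp_add]; simp
  have h2 : Real.exp (q*y) * Real.exp (-y) = Real.exp (-(p*y)) := by
    rw [← Real.exp_add]; congr 1; linear_combination y * hpq
  have h3 : Real.exp (-y) = Real.exp (-(p*y)) * Real.exp (-(q*y)) := by
    rw [← Real.exp_add]; congr 1; linear_combination y * hpq
  have h4 : psiF 0 1 y = 1 - Real.exp (-y) * (1+y) := by simp [psiF]
  rw [h4]
  linear_combination h1 + (∑' n : ℕ, EH n * (p*y)^n / n.factorial) * h2
    + (∑' n : ℕ, EH n * (q*y)^n / n.factorial) * h3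

lemma F_nonneg (hb : ∀ n, 0 ≤ EH n ∧ EH n ≤ K^n) {y : ℝ} (hy : 0 ≤ y) :
    0 ≤ ∑' n : ℕ, EH n * y^n / n.factorial * Real.exp (-y) :=
  tsum_nonneg fun n => mul_nonneg (div_nonneg (mul_nonneg (hb n).1 (pow_nonneg hy n))
    (Nat.cast_nonneg _)) (Real.exp_pos _).le

lemma F_le (hb : ∀ n, 0 ≤ EH n ∧ EH n ≤ K^n) (hK : 0 ≤ K)
    (hEH0 : EH 0 = 0) (hEH1 : EH 1 = 0) {x y : ℝ} (hy : 0 ≤ y) (hyx : y ≤ x) :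
    (∑' n : ℕ, EH n * y^n / n.factorial * Real.exp (-y))
      ≤ (K^2 * Real.exp (K*x)) * y^2 := by
  have hGn : 0 ≤ ∑' n : ℕ, EH n * y^n / n.factorial :=
    tsum_nonneg fun n => div_nonneg (mul_nonneg (hb n).1 (pow_nonneg hy n)) (Nat.cast_nonneg _)
  have he1 : Real.exp (-y) ≤ 1 := by rw [Real.exp_le_one_iff]; linarith
  have hFG : (∑' n : ℕ, EH n * y^n / n.factorial * Real.exp (-y))
      = (∑' n : ℕ, EH n * y^n / n.factorial) * Real.exp (-y) := tsum_mul_right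
  have hsum := summable_EH hb hK y
  have h2 := Summable.sum_add_tsum_nat_add (f := fun n : ℕ => EH n * y^n / (n.factorial:ℝ)) 2 hsum
  have h5 : (∑ i ∈ range 2, EH i * y^i/(i.factorial:ℝ)) = 0 := by
    simp [hEH0, hEH1, Finset.sum_range_succ]
  have hterm : ∀ i : ℕ, EH (i+2) * y^(i+2)/(((i+2).factorial):ℝ)
      ≤ y^2*K^2*((K*y)^i/((i.factorial):ℝ)) := by
    intro i
    have hfac : ((i.factorial:ℕ):ℝ) ≤ (((i+2).factorial:ℕ):ℝ) := by
      exact_mod_cast Nat.factorial_le (by omega)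
    have hfacpos : (0:ℝ) < (i.factorial:ℝ) := by exact_mod_cast i.factorial_pos
    have hfac2pos : (0:ℝ) < ((i+2).factorial:ℝ) := by exact_mod_cast (i+2).factorial_pos
    have e1 : EH (i+2)*y^(i+2) ≤ K^(i+2)*y^(i+2) :=
      mul_le_mul_of_nonneg_right (hb _).2 (pow_nonneg hy _)
    have hnum0 : 0 ≤ K^(i+2)*y^(i+2) := mul_nonneg (pow_nonneg hK _) (pow_nonneg hy _)
    have e3 : y^2*K^2*((K*y)^i/(i.factorial:ℝ)) = K^(i+2)*y^(i+2)/(i.factorial:ℝ) := by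
      rw [mul_pow, pow_add, pow_add]; ring
    calc EH (i+2)*y^(i+2)/(((i+2).factorial):ℝ)
        ≤ K^(i+2)*y^(i+2)/(((i+2).factorial):ℝ) := by gcongr
      _ ≤ K^(i+2)*y^(i+2)/((i.factorial):ℝ) := by gcongr
      _ = y^2*K^2*((K*y)^i/((i.factorial):ℝ)) := e3.symm
  have hsum1 : Summable fun i : ℕ => EH (i+2) * y^(i+2)/(((i+2).factorial):ℝ) :=
    (summable_nat_add_iff 2).2 hsum
  have hsum2 : Summable fun i : ℕ => y^2*K^2*((K*y)^i/((i.factorial):ℝ)) :=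
    (Real.summable_pow_div_factorial (K*y)).mul_left _
  have hle := Summable.tsum_le_tsum hterm hsum1 hsum2
  have hval : (∑' i : ℕ, y^2*K^2*((K*y)^i/((i.factorial):ℝ)))
      = y^2*K^2*Real.exp (K*y) := by
    rw [tsum_mul_left, ← exp_tsum]
  have hGeq : (∑' n : ℕ, EH n * y^n / n.factorial)
      = ∑' i : ℕ, EH (i+2) * y^(i+2)/(((i+2).factorial):ℝ) := by
    rw [← h2, h5, zero_add]
  have hexpmono : Real.exp (K*y) ≤ Real.exp (K*x) :=
    Real.exp_le_exp.2 (mul_le_mul_of_nonneg_left hyx hK)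
  have hG_le : (∑' n : ℕ, EH n * y^n / n.factorial) ≤ (K^2 * Real.exp (K*x)) * y^2 := by
    rw [hGeq]
    refine hle.trans ?_
    rw [hval]
    have : (0:ℝ) ≤ y^2*K^2 := by positivity
    nlinarith [this, hexpmono]
  rw [hFG]
  calc (∑' n : ℕ, EH n * y^n / n.factorial) * Real.exp (-y)
      ≤ (∑' n : ℕ, EH n * y^n / n.factorial) * 1 := by
        exact mul_le_mul_of_nonneg_left he1 hGn
    _ = ∑' n : ℕ, EH n * y^n / n.factorial := mul_one _
    _ ≤ (K^2 * Real.exp (K*x)) * y^2 := hG_le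

variable {F : ℝ → ℝ}

lemma tfun_step (hp : 0 ≤ p) (hq : 0 ≤ q)
    (hFeq : ∀ y, 0 ≤ y → F y = psiF 0 1 y + (F (p*y) + Real.exp (-(p*y)) * F (q*y))) :
    ∀ N y, 0 ≤ y → TFun p q F N y = sFun p q N y + TFun p q F (N+1) y := by
  intro N
  induction N with
  | zero =>
    intro y hy
    show F y = psiF 0 1 y + (F (p*y) + Real.exp (-(p*y)) * F (q*y))
    exact hFeq y hy
  | succ N ih =>
    intro y hy
    show TFun p q F N (p*y) + Real.exp (-(p*y)) * TFun p q F N (q*y)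
      = (sFun p q N (p*y) + Real.exp (-(p*y)) * sFun p q N (q*y))
        + (TFun p q F (N+1) (p*y) + Real.exp (-(p*y)) * TFun p q F (N+1) (q*y))
    rw [ih (p*y) (mul_nonneg hp hy), ih (q*y) (mul_nonneg hq hy)]
    ring

lemma tele (hp : 0 ≤ p) (hq : 0 ≤ q)
    (hFeq : ∀ y, 0 ≤ y → F y = psiF 0 1 y + (F (p*y) + Real.exp (-(p*y)) * F (q*y))) :
    ∀ N y, 0 ≤ y → F y = (∑ i ∈ range N, sFun p q i y) + TFun p q F N y := by
  intro N
  induction N with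
  | zero => intro y hy; simp; rfl
  | succ N ih =>
    intro y hy
    rw [Finset.sum_range_succ, ih y hy, tfun_step hp hq hFeq N y hy]
    ring

lemma tfun_bound (hp : 0 < p) (hp1 : p ≤ 1) (hq : 0 < q) (hq1 : q ≤ 1) {x C : ℝ} (hC : 0 ≤ C)
    (hF0 : ∀ y, 0 ≤ y → y ≤ x → 0 ≤ F y) (hFC : ∀ y, 0 ≤ y → y ≤ x → F y ≤ C*y^2) :
    ∀ N y, 0 ≤ y → y ≤ x → 0 ≤ TFun p q F N y ∧ TFun p q F N y ≤ C*((p^2+q^2)^N)*y^2 := by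
  intro N
  induction N with
  | zero =>
    intro y hy hyx
    exact ⟨hF0 y hy hyx, by simpa [TFun] using hFC y hy hyx⟩
  | succ N ih =>
    intro y hy hyx
    have hpy : p*y ≤ x := by nlinarith
    have hqy : q*y ≤ x := by nlinarith
    obtain ⟨a1, a2⟩ := ih (p*y) (mul_nonneg hp.le hy) hpy
    obtain ⟨b1, b2⟩ := ih (q*y) (mul_nonneg hq.le hy) hqy
    have he1 : Real.exp (-(p*y)) ≤ 1 := by
      rw [Real.exp_le_one_iff]; simp; positivity
    have he0 := (Real.exp_pos (-(p*y))).le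
    have hr : (0:ℝ) ≤ (p^2+q^2)^N := by positivity
    constructor
    · show 0 ≤ TFun p q F N (p*y) + Real.exp (-(p*y)) * TFun p q F N (q*y)
      nlinarith
    · show TFun p q F N (p*y) + Real.exp (-(p*y)) * TFun p q F N (q*y)
        ≤ C*((p^2+q^2)^(N+1))*y^2
      have h1 : Real.exp (-(p*y)) * TFun p q F N (q*y) ≤ C*((p^2+q^2)^N)*(q*y)^2 := by
        nlinarith
      have h2 : C*((p^2+q^2)^N)*(p*y)^2 + C*((p^2+q^2)^N)*(q*y)^2
          = C*((p^2+q^2)^(N+1))*y^2 := by ring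
      linarith
end Tele
section Prob
variable {Ω : Type*} [MeasurableSpace Ω] {μ : Measure Ω}

lemma ofReal_prod_nonneg {ι : Type*} (s : Finset ι) (g : ι → ℝ) (h : ∀ j ∈ s, 0 ≤ g j) :
    ∏ j ∈ s, ENNReal.ofReal (g j) = ENNReal.ofReal (∏ j ∈ s, g j) := by
  induction s using Finset.cons_induction with
  | empty => simp
  | cons a s ha ih =>
    rw [Finset.prod_cons, Finset.prod_cons, ih (fun j hj => h j (Finset.mem_cons_of_mem hj)),
      ← ENNReal.ofReal_mul (h a (Finset.mem_cons_self a s))]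

lemma tsum_toReal_ofReal_nonneg {g : ℕ → ℝ} (h : ∀ i, 0 ≤ g i) :
    (∑' i, g i) = (∑' i, ENNReal.ofReal (g i)).toReal := by
  by_cases hs : Summable g
  · rw [← ENNReal.ofReal_tsum_of_nonneg h hs, ENNReal.toReal_ofReal (tsum_nonneg h)]
  · rw [tsum_eq_zero_of_not_summable hs]
    have htop : (∑' i, ENNReal.ofReal (g i)) = ⊤ := by
      by_contra hne
      exact hs ((ENNReal.summable_toReal hne).congr
        (fun i => ENNReal.toReal_ofReal (h i)))
    rw [htop]; simp

variable {A B : ℕ → Ω → ℝ} {t1 t2 : Ω → ℝ} {p q x : ℝ}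

/-- event that the first `i` coin values agree with the boolean string `v`. -/
def EvSet (A B : ℕ → Ω → ℝ) (p q : ℝ) {i : ℕ} (v : Fin i → Bool) : Set Ω :=
  ⋂ j ∈ Finset.range i,
    (fun ω => (A j ω, B j ω)) ⁻¹' {(aOf p q (extB v j), bOf p (extB v j))}

/-- the `t`-event attached to the string `v`. -/
def TvSet (t1 t2 : Ω → ℝ) (p q x : ℝ) {i : ℕ} (v : Fin i → Bool) : Set Ω :=
  {ω | alStr p q v * x < t1 ω ∧ t2 ω ≤ (alStr p q v + piStr p q v) * x}

lemma EvSet_meas (hABmeas : ∀ j, Measurable fun ω => (A j ω, B j ω)) {i : ℕ}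
    (v : Fin i → Bool) : MeasurableSet (EvSet A B p q v) :=
  MeasurableSet.biInter (Finset.range i).countable_toSet
    fun j _ => hABmeas j (measurableSet_singleton _)

lemma TvSet_meas (ht1 : Measurable t1) (ht2 : Measurable t2) {i : ℕ} (v : Fin i → Bool) :
    MeasurableSet (TvSet t1 t2 p q x v) := by
  have h1 : TvSet t1 t2 p q x v = {ω | alStr p q v * x < t1 ω}
      ∩ {ω | t2 ω ≤ (alStr p q v + piStr p q v) * x} := rfl
  rw [h1]
  exact (measurableSet_lt measurable_const ht1).inter (measurableSet_le ht2 measurable_const)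

lemma EvSet_prob [IsProbabilityMeasure μ] (hp : 0 ≤ p) (hq : 0 ≤ q)
    (hABindep : iIndepFun (fun j ω => (A j ω, B j ω)) μ)
    (hABdist : ∀ j, μ {ω | A j ω = p ∧ B j ω = 0} = ENNReal.ofReal p ∧
                    μ {ω | A j ω = q ∧ B j ω = p} = ENNReal.ofReal q)
    {i : ℕ} (v : Fin i → Bool) :
    μ (EvSet A B p q v) = ENNReal.ofReal (piStr p q v) := by
  have h1 := hABindep.meas_biInter (S := Finset.range i)
    (s := fun j => (fun ω => (A j ω, B j ω)) ⁻¹'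
      {(aOf p q (extB v j), bOf p (extB v j))})
    (fun j _ => ⟨{(aOf p q (extB v j), bOf p (extB v j))}, measurableSet_singleton _, rfl⟩)
  have h2 : ∀ j, μ ((fun ω => (A j ω, B j ω)) ⁻¹'
      {(aOf p q (extB v j), bOf p (extB v j))}) = ENNReal.ofReal (aOf p q (extB v j)) := by
    intro j
    cases hbool : extB v j
    · have hset : (fun ω => (A j ω, B j ω)) ⁻¹'
          {(aOf p q false, bOf p false)} = {ω | A j ω = p ∧ B j ω = 0} := by
        ext ω; simp [aOf, bOf, Prod.ext_iff]
      rw [hset, (hABdist j).1]; simp [aOf]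
    · have hset : (fun ω => (A j ω, B j ω)) ⁻¹'
          {(aOf p q true, bOf p true)} = {ω | A j ω = q ∧ B j ω = p} := by
        ext ω; simp [aOf, bOf, Prod.ext_iff]
      rw [hset, (hABdist j).2]; simp [aOf]
  have h3 : EvSet A B p q v = ⋂ j ∈ Finset.range i,
      (fun ω => (A j ω, B j ω)) ⁻¹' {(aOf p q (extB v j), bOf p (extB v j))} := rfl
  rw [h3, h1, Finset.prod_congr rfl (fun j _ => h2 j),
    ofReal_prod_nonneg _ _ (fun j _ => by unfold aOf; cases extB v j <;> simp [hp, hq])]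
  rfl

lemma t1_tail [IsProbabilityMeasure μ] (ht1 : Measurable t1) (ht2 : Measurable t2)
    (hts : ∀ᵐ ω ∂μ, 0 < t1 ω ∧ t1 ω ≤ t2 ω)
    (htlaw : ∀ a b : ℝ, 0 ≤ a → a ≤ b →
      μ {ω | a < t1 ω ∧ b < t2 ω} = ENNReal.ofReal (Real.exp (-b) * (1 + b - a)))
    {a : ℝ} (ha : 0 ≤ a) : μ {ω | a < t1 ω} = ENNReal.ofReal (Real.exp (-a)) := by
  have he : {ω | a < t1 ω} =ᵐ[μ] {ω | a < t1 ω ∧ a < t2 ω} := by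
    rw [Filter.eventuallyEq_set]
    filter_upwards [hts] with ω hω
    constructor
    · intro h; exact ⟨h, lt_of_lt_of_le h hω.2⟩
    · intro h; exact h.1
  rw [measure_congr he, htlaw a a ha le_rfl]
  norm_num

lemma Tv_prob_ab [IsProbabilityMeasure μ] (ht1 : Measurable t1) (ht2 : Measurable t2)
    (hts : ∀ᵐ ω ∂μ, 0 < t1 ω ∧ t1 ω ≤ t2 ω)
    (htlaw : ∀ a b : ℝ, 0 ≤ a → a ≤ b →
      μ {ω | a < t1 ω ∧ b < t2 ω} = ENNReal.ofReal (Real.exp (-b) * (1 + b - a)))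
    {a b : ℝ} (ha : 0 ≤ a) (hab : a ≤ b) :
    μ {ω | a < t1 ω ∧ t2 ω ≤ b}
      = ENNReal.ofReal (Real.exp (-a) - Real.exp (-b) * (1 + b - a)) := by
  have hset : {ω | a < t1 ω ∧ t2 ω ≤ b}
      = {ω | a < t1 ω} \ {ω | a < t1 ω ∧ b < t2 ω} := by
    ext ω; simp only [Set.mem_setOf_eq, Set.mem_diff, not_and, not_lt]
    tauto
  have hmeas2 : MeasurableSet {ω | a < t1 ω ∧ b < t2 ω} := by
    have : {ω | a < t1 ω ∧ b < t2 ω} = {ω | a < t1 ω} ∩ {ω | b < t2 ω} := rfl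
    rw [this]
    exact (measurableSet_lt measurable_const ht1).inter (measurableSet_lt measurable_const ht2)
  have hsub : {ω | a < t1 ω ∧ b < t2 ω} ⊆ {ω | a < t1 ω} := fun ω hω => hω.1
  rw [hset, measure_diff hsub hmeas2.nullMeasurableSet (measure_ne_top μ _),
    t1_tail ht1 ht2 hts htlaw ha, htlaw a b ha hab]
  have hnn : 0 ≤ Real.exp (-b) * (1 + b - a) := by
    have := Real.exp_pos (-b); nlinarith
  exact (ENNReal.ofReal_sub _ hnn).symm

lemma EvTv_indep [IsProbabilityMeasure μ]
    (hindepT : IndepFun (fun ω => (t1 ω, t2 ω)) (fun ω (j : ℕ) => (A j ω, B j ω)) μ)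
    {i : ℕ} (v : Fin i → Bool) :
    μ (EvSet A B p q v ∩ TvSet t1 t2 p q x v)
      = μ (EvSet A B p q v) * μ (TvSet t1 t2 p q x v) := by
  have hT : TvSet t1 t2 p q x v = (fun ω => (t1 ω, t2 ω)) ⁻¹'
      {z : ℝ × ℝ | alStr p q v * x < z.1 ∧ z.2 ≤ (alStr p q v + piStr p q v) * x} := rfl
  have hE : EvSet A B p q v = (fun ω (j : ℕ) => (A j ω, B j ω)) ⁻¹'
      (⋂ j ∈ Finset.range i,
        (fun g : ℕ → ℝ × ℝ => g j) ⁻¹' {(aOf p q (extB v j), bOf p (extB v j))}) := by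
    unfold EvSet
    ext ω; simp
  have hmeas1 : MeasurableSet {z : ℝ × ℝ | alStr p q v * x < z.1
      ∧ z.2 ≤ (alStr p q v + piStr p q v) * x} := by
    have : {z : ℝ × ℝ | alStr p q v * x < z.1 ∧ z.2 ≤ (alStr p q v + piStr p q v) * x}
        = {z : ℝ × ℝ | alStr p q v * x < z.1}
          ∩ {z : ℝ × ℝ | z.2 ≤ (alStr p q v + piStr p q v) * x} := rfl
    rw [this]
    exact (measurableSet_lt measurable_const measurable_fst).inter
      (measurableSet_le measurable_snd measurable_const)
  have hmeas2 : MeasurableSet (⋂ j ∈ Finset.range i,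
      (fun g : ℕ → ℝ × ℝ => g j) ⁻¹' {(aOf p q (extB v j), bOf p (extB v j))}) :=
    MeasurableSet.biInter (Finset.range i).countable_toSet
      fun j _ => measurable_pi_apply j (measurableSet_singleton _)
  rw [hE, hT, Set.inter_comm,
    hindepT.measure_inter_preimage_eq_mul _ _ hmeas1 hmeas2, mul_comm]
end Prob
section Pointwise
variable {Ω : Type*} [MeasurableSpace Ω]
variable {A B : ℕ → Ω → ℝ} {t1 t2 : Ω → ℝ} {p q x : ℝ}

lemma good_coords (hp : 0 < p) {ω : Ω}
    (hgood : ∀ j, (A j ω = p ∧ B j ω = 0) ∨ (A j ω = q ∧ B j ω = p)) (i : ℕ) :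
    ∀ j : ℕ, j < i →
      A j ω = aOf p q (extB (fun j : Fin i => if B (j:ℕ) ω = 0 then false else true) j)
      ∧ B j ω = bOf p (extB (fun j : Fin i => if B (j:ℕ) ω = 0 then false else true) j) := by
  intro j hj
  have hext : extB (fun j : Fin i => if B (j:ℕ) ω = 0 then false else true) j
      = if B j ω = 0 then false else true := by
    simp [extB, hj]
  rcases hgood j with ⟨hA, hB⟩ | ⟨hA, hB⟩
  · rw [hext, if_pos hB]; exact ⟨by simp [aOf, hA], by simp [bOf, hB]⟩
  · have hBne : B j ω ≠ 0 := by rw [hB]; exact ne_of_gt hp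
    rw [hext, if_neg hBne]; exact ⟨by simp [aOf, hA], by simp [bOf, hB]⟩

lemma pointwise_decomp (hp : 0 < p) {ω : Ω}
    (hgood : ∀ j, (A j ω = p ∧ B j ω = 0) ∨ (A j ω = q ∧ B j ω = p)) (i : ℕ) :
    ENNReal.ofReal (Set.indicator
        {ω' : Ω | alphaSeq (fun j => A j ω') (fun j => B j ω') i * x < t1 ω' ∧
          t2 ω' ≤ (alphaSeq (fun j => A j ω') (fun j => B j ω') i
            + prodSeq (fun j => A j ω') i) * x}
        (fun ω' => 1 / prodSeq (fun j => A j ω') i) ω)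
      = ∑ v : Fin i → Bool, Set.indicator (EvSet A B p q v ∩ TvSet t1 t2 p q x v)
          (fun _ => ENNReal.ofReal (1 / piStr p q v)) ω := by
  classical
  set v0 : Fin i → Bool := fun j => if B (j:ℕ) ω = 0 then false else true with hv0
  have hcoords := good_coords hp hgood i
  have hmem : ω ∈ EvSet A B p q v0 := by
    unfold EvSet
    refine Set.mem_iInter₂.2 fun j hj => ?_
    have hj' := Finset.mem_range.1 hj
    obtain ⟨h1, h2⟩ := hcoords j hj'
    rw [← hv0] at h1 h2
    simp only [Set.mem_preimage, Set.mem_singleton_iff, Prod.ext_iff]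
    exact ⟨h1, h2⟩
  have huniq : ∀ v : Fin i → Bool, ω ∈ EvSet A B p q v → v = v0 := by
    intro v hv
    funext j
    have hj : (j:ℕ) < i := j.isLt
    have hmem' := Set.mem_iInter₂.1 hv (j:ℕ) (Finset.mem_range.2 hj)
    simp only [Set.mem_preimage, Set.mem_singleton_iff, Prod.ext_iff] at hmem'
    have hBj : B (j:ℕ) ω = bOf p (extB v (j:ℕ)) := hmem'.2
    have hextv : extB v (j:ℕ) = v j := by simp [extB, hj]
    have hextv0 : v0 j = if B (j:ℕ) ω = 0 then false else true := rfl
    cases hvj : v j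
    · have hB0 : B (j:ℕ) ω = 0 := by rw [hBj, hextv, hvj]; simp [bOf]
      rw [hextv0, if_pos hB0]
    · have hBp : B (j:ℕ) ω = p := by rw [hBj, hextv, hvj]; simp [bOf]
      have hne : B (j:ℕ) ω ≠ 0 := by rw [hBp]; exact ne_of_gt hp
      rw [hextv0, if_neg hne]
  have hprod : prodSeq (fun j => A j ω) i = piStr p q v0 :=
    prodSeq_congr fun j hj => (hcoords j hj).1
  have halpha : alphaSeq (fun j => A j ω) (fun j => B j ω) i = alStr p q v0 :=
    alphaSeq_congr (fun j hj => (hcoords j hj).1) (fun j hj => (hcoords j hj).2)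
  have hsum_single : (∑ v : Fin i → Bool,
        Set.indicator (EvSet A B p q v ∩ TvSet t1 t2 p q x v)
          (fun _ => ENNReal.ofReal (1 / piStr p q v)) ω)
      = Set.indicator (EvSet A B p q v0 ∩ TvSet t1 t2 p q x v0)
          (fun _ => ENNReal.ofReal (1 / piStr p q v0)) ω := by
    refine Finset.sum_eq_single v0 (fun v _ hne => ?_)
      (fun habs => absurd (Finset.mem_univ v0) habs)
    exact Set.indicator_of_notMem (fun hvmem => hne (huniq v hvmem.1)) _
  rw [hsum_single]
  by_cases hT : ω ∈ TvSet t1 t2 p q x v0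
  · have hS : ω ∈ {ω' : Ω | alphaSeq (fun j => A j ω') (fun j => B j ω') i * x < t1 ω' ∧
        t2 ω' ≤ (alphaSeq (fun j => A j ω') (fun j => B j ω') i
          + prodSeq (fun j => A j ω') i) * x} := by
      have hT' : alStr p q v0 * x < t1 ω ∧
          t2 ω ≤ (alStr p q v0 + piStr p q v0) * x := hT
      simp only [Set.mem_setOf_eq]
      rw [halpha, hprod]
      exact hT'
    have hmemInter : ω ∈ EvSet A B p q v0 ∩ TvSet t1 t2 p q x v0 := ⟨hmem, hT⟩
    rw [Set.indicator_of_mem hmemInter, Set.indicator_of_mem hS, hprod]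
  · have hS : ω ∉ {ω' : Ω | alphaSeq (fun j => A j ω') (fun j => B j ω') i * x < t1 ω' ∧
        t2 ω' ≤ (alphaSeq (fun j => A j ω') (fun j => B j ω') i
          + prodSeq (fun j => A j ω') i) * x} := by
      intro hmem'
      apply hT
      simp only [Set.mem_setOf_eq] at hmem'
      rw [halpha, hprod] at hmem'
      exact hmem'
    rw [Set.indicator_of_notMem hS, Set.indicator_of_notMem (fun hc => hT hc.2)]
    simp

lemma pointwise_nonneg (hp : 0 < p) (hq : 0 < q) {ω : Ω}
    (hgood : ∀ j, (A j ω = p ∧ B j ω = 0) ∨ (A j ω = q ∧ B j ω = p)) (i : ℕ) :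
    0 ≤ Set.indicator
        {ω' : Ω | alphaSeq (fun j => A j ω') (fun j => B j ω') i * x < t1 ω' ∧
          t2 ω' ≤ (alphaSeq (fun j => A j ω') (fun j => B j ω') i
            + prodSeq (fun j => A j ω') i) * x}
        (fun ω' => 1 / prodSeq (fun j => A j ω') i) ω := by
  refine Set.indicator_apply_nonneg fun _ => ?_
  have hprod : prodSeq (fun j => A j ω) i
      = piStr p q (fun j : Fin i => if B (j:ℕ) ω = 0 then false else true) :=
    prodSeq_congr fun j hj => (good_coords hp hgood i j hj).1
  rw [hprod]
  have := piStr_pos hp hq (fun j : Fin i => if B (j:ℕ) ω = 0 then false else true)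
  positivity
end Pointwise
/-- Poisson model of the leader election algorithm: with `t_1 < t_2` the first two
points of a rate-1 Poisson process (so `P(t_1 > a, t_2 > b) = e^{-b}(1 + b - a)` for
`0 ≤ a ≤ b`), and `(A_j, B_j)` an i.i.d. sequence independent of `(t_1,t_2)` with
`P(A=p,B=0)=p`, `P(A=q,B=p)=q`, the Poisson transform of the expected costs satisfies
`E(H_{N_x}) = E( Σ_i (1/π_i) 1_{α_i x < t_1, t_2 ≤ (α_i+π_i) x} )`. -/
theorem poisson_model_cost_representation
    {Ω : Type*} [MeasurableSpace Ω] (μ : Measure Ω) [IsProbabilityMeasure μ]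
    (p q : ℝ) (hp : 0 < p) (hp1 : p < 1) (hq : q = 1 - p)
    (EH : ℕ → ℝ) (hEH0 : EH 0 = 0) (hEH1 : EH 1 = 0)
    (hrec : ∀ n, 2 ≤ n →
      EH n = 1 + (∑ k ∈ range (n + 1), (n.choose k : ℝ) * p ^ k * q ^ (n - k) * EH k)
        + q ^ n * EH n)
    (t1 t2 : Ω → ℝ) (ht1 : Measurable t1) (ht2 : Measurable t2)
    (hts : ∀ᵐ ω ∂μ, 0 < t1 ω ∧ t1 ω ≤ t2 ω)
    (htlaw : ∀ a b : ℝ, 0 ≤ a → a ≤ b →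
      μ {ω | a < t1 ω ∧ b < t2 ω} = ENNReal.ofReal (Real.exp (-b) * (1 + b - a)))
    (A B : ℕ → Ω → ℝ)
    (hABmeas : ∀ j, Measurable fun ω => (A j ω, B j ω))
    (hABindep : iIndepFun (fun j ω => (A j ω, B j ω)) μ)
    (hABdist : ∀ j, μ {ω | A j ω = p ∧ B j ω = 0} = ENNReal.ofReal p ∧
                    μ {ω | A j ω = q ∧ B j ω = p} = ENNReal.ofReal q)
    (hindepT : IndepFun (fun ω => (t1 ω, t2 ω)) (fun ω (j : ℕ) => (A j ω, B j ω)) μ)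
    (x : ℝ) (hx : 0 < x) :
    ∑' n : ℕ, EH n * x ^ n / n.factorial * Real.exp (-x)
      = ∫ ω, (∑' i : ℕ,
          Set.indicator
            {ω' : Ω | alphaSeq (fun j => A j ω') (fun j => B j ω') i * x < t1 ω' ∧
              t2 ω' ≤ (alphaSeq (fun j => A j ω') (fun j => B j ω') i
                + prodSeq (fun j => A j ω') i) * x}
            (fun ω' => 1 / prodSeq (fun j => A j ω') i) ω) ∂μ := by
  classical
  have hq0 : 0 < q := by rw [hq]; linarith
  have hpq : p + q = 1 := by rw [hq]; ring
  have hq1' : q ≤ 1 := by rw [hq]; linarith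
  set K : ℝ := 1/(p*q) with hKdef
  have hK0 : (0:ℝ) ≤ K := by positivity
  have hb : ∀ n, 0 ≤ EH n ∧ EH n ≤ K^n := EH_bounds hp hq0 hpq hEH0 hEH1 hrec
  set F : ℝ → ℝ := fun y => ∑' n : ℕ, EH n * y ^ n / n.factorial * Real.exp (-y) with hFdef
  have hFeq : ∀ y, 0 ≤ y → F y = psiF 0 1 y + (F (p*y) + Real.exp (-(p*y)) * F (q*y)) :=
    fun y _ => funEqF hpq hb hK0 hEH0 hEH1 hrec y
  set C : ℝ := K^2 * Real.exp (K*x) with hCdef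
  have hC0 : (0:ℝ) ≤ C := by positivity
  have hF0 : ∀ y, 0 ≤ y → y ≤ x → 0 ≤ F y := fun y hy _ => F_nonneg hb hy
  have hFC : ∀ y, 0 ≤ y → y ≤ x → F y ≤ C*y^2 := fun y hy hyx => F_le hb hK0 hEH0 hEH1 hy hyx
  have hr0 : (0:ℝ) ≤ p^2+q^2 := by positivity
  have hr1 : p^2+q^2 < 1 := by nlinarith
  have hs_nonneg : ∀ i, 0 ≤ sFun p q i x := fun i => sFun_nonneg hp.le hq0.le i x hx.le
  have hs_summ : Summable fun i => sFun p q i x := by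
    refine Summable.of_nonneg_of_le hs_nonneg (fun i => sFun_le hp.le hq0.le i x hx.le) ?_
    exact (summable_geometric_of_lt_one hr0 hr1).mul_right _
  -- LHS equals the deterministic series
  have hLHS : F x = ∑' i, sFun p q i x := by
    have htend1 := hs_summ.hasSum.tendsto_sum_nat
    have hTb := tfun_bound hp hp1.le hq0 hq1' hC0 hF0 hFC
    have htendT : Filter.Tendsto (fun N => TFun p q F N x) Filter.atTop (nhds 0) := by
      have hg : Filter.Tendsto (fun N : ℕ => C*((p^2+q^2)^N)*x^2) Filter.atTop (nhds 0) := by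
        have heq : (fun N : ℕ => C*((p^2+q^2)^N)*x^2)
            = fun N : ℕ => (C*x^2)*(p^2+q^2)^N := funext fun N => by ring
        rw [heq]
        simpa using (tendsto_pow_atTop_nhds_zero_of_lt_one hr0 hr1).const_mul (C*x^2)
      exact squeeze_zero (fun N => (hTb N x hx.le le_rfl).1)
        (fun N => (hTb N x hx.le le_rfl).2) hg
    have htele := tele hp.le hq0.le hFeq
    have htend2 : Filter.Tendsto (fun N => ∑ i ∈ range N, sFun p q i x)
        Filter.atTop (nhds (F x)) := by
      have heq : (fun N => ∑ i ∈ range N, sFun p q i x)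
          = fun N => F x - TFun p q F N x := funext fun N => by linarith [htele N x hx.le]
      rw [heq]
      simpa using Filter.Tendsto.sub (tendsto_const_nhds (x := F x)) htendT
    exact tendsto_nhds_unique htend2 htend1
  -- measurability
  have hmA : ∀ j, Measurable (A j) := fun j => (hABmeas j).fst
  have hmB : ∀ j, Measurable (B j) := fun j => (hABmeas j).snd
  have hmPi : ∀ i : ℕ, Measurable fun ω => prodSeq (fun j => A j ω) i := fun i => by
    unfold prodSeq; exact Finset.measurable_prod _ fun j _ => hmA j
  have hmAl : ∀ i : ℕ, Measurable fun ω => alphaSeq (fun j => A j ω) (fun j => B j ω) i :=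
    fun i => by
      unfold alphaSeq; exact Finset.measurable_sum _ fun j _ => (hmPi j).mul (hmB j)
  have hSmeas : ∀ i : ℕ, MeasurableSet
      {ω' : Ω | alphaSeq (fun j => A j ω') (fun j => B j ω') i * x < t1 ω' ∧
        t2 ω' ≤ (alphaSeq (fun j => A j ω') (fun j => B j ω') i
          + prodSeq (fun j => A j ω') i) * x} := fun i => by
    have h1 : {ω' : Ω | alphaSeq (fun j => A j ω') (fun j => B j ω') i * x < t1 ω' ∧
        t2 ω' ≤ (alphaSeq (fun j => A j ω') (fun j => B j ω') i
          + prodSeq (fun j => A j ω') i) * x}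
        = {ω' | alphaSeq (fun j => A j ω') (fun j => B j ω') i * x < t1 ω'}
          ∩ {ω' | t2 ω' ≤ (alphaSeq (fun j => A j ω') (fun j => B j ω') i
            + prodSeq (fun j => A j ω') i) * x} := rfl
    rw [h1]
    exact (measurableSet_lt ((hmAl i).mul_const x) ht1).inter
      (measurableSet_le ht2 (((hmAl i).add (hmPi i)).mul_const x))
  have hfmeas : ∀ i : ℕ, Measurable fun ω => Set.indicator
      {ω' : Ω | alphaSeq (fun j => A j ω') (fun j => B j ω') i * x < t1 ω' ∧
        t2 ω' ≤ (alphaSeq (fun j => A j ω') (fun j => B j ω') i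
          + prodSeq (fun j => A j ω') i) * x}
      (fun ω' => 1 / prodSeq (fun j => A j ω') i) ω := fun i => by
    have hg : Measurable fun ω' : Ω => 1 / prodSeq (fun j => A j ω') i := by
      exact measurable_const.div (hmPi i)
    exact hg.indicator (hSmeas i)
  -- almost-every ω has good coin values
  have hgoodae : ∀ᵐ ω ∂μ, ∀ j, (A j ω = p ∧ B j ω = 0) ∨ (A j ω = q ∧ B j ω = p) := by
    rw [MeasureTheory.ae_all_iff]
    intro j
    have hm1 : MeasurableSet {ω | A j ω = p ∧ B j ω = 0} := by
      have : {ω | A j ω = p ∧ B j ω = 0} = (fun ω => (A j ω, B j ω)) ⁻¹' {(p, 0)} := by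
        ext ω; simp [Prod.ext_iff]
      rw [this]; exact (hABmeas j) (measurableSet_singleton _)
    have hm2 : MeasurableSet {ω | A j ω = q ∧ B j ω = p} := by
      have : {ω | A j ω = q ∧ B j ω = p} = (fun ω => (A j ω, B j ω)) ⁻¹' {(q, p)} := by
        ext ω; simp [Prod.ext_iff]
      rw [this]; exact (hABmeas j) (measurableSet_singleton _)
    have hU : μ ({ω | A j ω = p ∧ B j ω = 0} ∪ {ω | A j ω = q ∧ B j ω = p}) = 1 := by
      have hd : Disjoint {ω | A j ω = p ∧ B j ω = 0} {ω | A j ω = q ∧ B j ω = p} := by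
        rw [Set.disjoint_left]
        rintro ω ⟨_, h0⟩ ⟨_, hp'⟩
        rw [h0] at hp'
        exact absurd hp'.symm (ne_of_gt hp)
      rw [measure_union hd hm2, (hABdist j).1, (hABdist j).2,
        ← ENNReal.ofReal_add hp.le hq0.le, hpq]
      simp
    have hcompl : μ ({ω | A j ω = p ∧ B j ω = 0} ∪ {ω | A j ω = q ∧ B j ω = p})ᶜ = 0 := by
      rw [measure_compl (hm1.union hm2) (measure_ne_top μ _), hU, measure_univ]
      simp
    rw [MeasureTheory.ae_iff]
    have hset : {ω | ¬((A j ω = p ∧ B j ω = 0) ∨ (A j ω = q ∧ B j ω = p))}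
        = ({ω | A j ω = p ∧ B j ω = 0} ∪ {ω | A j ω = q ∧ B j ω = p})ᶜ := by
      ext ω; simp [Set.mem_union]
    rw [hset]
    exact hcompl
  -- per-index lintegral value
  have hlint : ∀ i : ℕ, (∫⁻ ω, ENNReal.ofReal (Set.indicator
      {ω' : Ω | alphaSeq (fun j => A j ω') (fun j => B j ω') i * x < t1 ω' ∧
        t2 ω' ≤ (alphaSeq (fun j => A j ω') (fun j => B j ω') i
          + prodSeq (fun j => A j ω') i) * x}
      (fun ω' => 1 / prodSeq (fun j => A j ω') i) ω) ∂μ)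
      = ENNReal.ofReal (sFun p q i x) := by
    intro i
    have hstep1 : (∫⁻ ω, ENNReal.ofReal (Set.indicator
        {ω' : Ω | alphaSeq (fun j => A j ω') (fun j => B j ω') i * x < t1 ω' ∧
          t2 ω' ≤ (alphaSeq (fun j => A j ω') (fun j => B j ω') i
            + prodSeq (fun j => A j ω') i) * x}
        (fun ω' => 1 / prodSeq (fun j => A j ω') i) ω) ∂μ)
        = ∫⁻ ω, (∑ v : Fin i → Bool,
            Set.indicator (EvSet A B p q v ∩ TvSet t1 t2 p q x v)
              (fun _ => ENNReal.ofReal (1 / piStr p q v)) ω) ∂μ := by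
      refine lintegral_congr_ae ?_
      filter_upwards [hgoodae] with ω hgood
      exact pointwise_decomp hp hgood i
    rw [hstep1, lintegral_finset_sum _ (fun v _ => Measurable.indicator measurable_const
      ((EvSet_meas hABmeas v).inter (TvSet_meas ht1 ht2 v)))]
    have hterm : ∀ v : Fin i → Bool, (∫⁻ ω, Set.indicator
        (EvSet A B p q v ∩ TvSet t1 t2 p q x v)
          (fun _ => ENNReal.ofReal (1 / piStr p q v)) ω ∂μ)
        = ENNReal.ofReal (psiF (alStr p q v) (piStr p q v) x) := by
      intro v
      have hπ := piStr_pos hp hq0 v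
      have hα := alStr_nonneg hp.le hq0.le v
      rw [lintegral_indicator_const ((EvSet_meas hABmeas v).inter (TvSet_meas ht1 ht2 v)),
        EvTv_indep hindepT v, EvSet_prob hp.le hq0.le hABindep hABdist v]
      have hTv : μ (TvSet t1 t2 p q x v)
          = ENNReal.ofReal (psiF (alStr p q v) (piStr p q v) x) := by
        have ha : 0 ≤ alStr p q v * x := mul_nonneg hα hx.le
        have hab : alStr p q v * x ≤ (alStr p q v + piStr p q v) * x := by nlinarith
        have hval := Tv_prob_ab ht1 ht2 hts htlaw ha hab
        rw [show TvSet t1 t2 p q x v = {ω | alStr p q v * x < t1 ω ∧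
          t2 ω ≤ (alStr p q v + piStr p q v) * x} from rfl, hval]
        congr 1
        unfold psiF
        ring
      rw [hTv, ← ENNReal.ofReal_mul (le_of_lt hπ),
        ← ENNReal.ofReal_mul (by positivity : (0:ℝ) ≤ 1/piStr p q v)]
      congr 1
      field_simp
    rw [Finset.sum_congr rfl (fun v _ => hterm v),
      ← ENNReal.ofReal_sum_of_nonneg
        (fun v _ => psiF_nonneg (le_of_lt (piStr_pos hp hq0 v)) hx.le),
      sumPsi p q i x]
  -- total lintegral
  have hof : ∀ i : ℕ, Measurable fun ω => ENNReal.ofReal (Set.indicator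
      {ω' : Ω | alphaSeq (fun j => A j ω') (fun j => B j ω') i * x < t1 ω' ∧
        t2 ω' ≤ (alphaSeq (fun j => A j ω') (fun j => B j ω') i
          + prodSeq (fun j => A j ω') i) * x}
      (fun ω' => 1 / prodSeq (fun j => A j ω') i) ω) :=
    fun i => ENNReal.measurable_ofReal.comp (hfmeas i)
  have hGmeas : Measurable fun ω => ∑' i : ℕ, ENNReal.ofReal (Set.indicator
      {ω' : Ω | alphaSeq (fun j => A j ω') (fun j => B j ω') i * x < t1 ω' ∧
        t2 ω' ≤ (alphaSeq (fun j => A j ω') (fun j => B j ω') i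
          + prodSeq (fun j => A j ω') i) * x}
      (fun ω' => 1 / prodSeq (fun j => A j ω') i) ω) :=
    Measurable.ennreal_tsum hof
  have htotal : (∫⁻ ω, (∑' i : ℕ, ENNReal.ofReal (Set.indicator
      {ω' : Ω | alphaSeq (fun j => A j ω') (fun j => B j ω') i * x < t1 ω' ∧
        t2 ω' ≤ (alphaSeq (fun j => A j ω') (fun j => B j ω') i
          + prodSeq (fun j => A j ω') i) * x}
      (fun ω' => 1 / prodSeq (fun j => A j ω') i) ω)) ∂μ) = ENNReal.ofReal (F x) := by
    rw [lintegral_tsum fun i => (hof i).aemeasurable,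
      tsum_congr hlint, ← ENNReal.ofReal_tsum_of_nonneg hs_nonneg hs_summ, ← hLHS]
  have hint : (∫ ω, (∑' i : ℕ,
      Set.indicator
        {ω' : Ω | alphaSeq (fun j => A j ω') (fun j => B j ω') i * x < t1 ω' ∧
          t2 ω' ≤ (alphaSeq (fun j => A j ω') (fun j => B j ω') i
            + prodSeq (fun j => A j ω') i) * x}
        (fun ω' => 1 / prodSeq (fun j => A j ω') i) ω) ∂μ) = F x := by
    have h1 : (∫ ω, (∑' i : ℕ,
        Set.indicator
          {ω' : Ω | alphaSeq (fun j => A j ω') (fun j => B j ω') i * x < t1 ω' ∧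
            t2 ω' ≤ (alphaSeq (fun j => A j ω') (fun j => B j ω') i
              + prodSeq (fun j => A j ω') i) * x}
          (fun ω' => 1 / prodSeq (fun j => A j ω') i) ω) ∂μ)
        = ∫ ω, (∑' i : ℕ, ENNReal.ofReal (Set.indicator
            {ω' : Ω | alphaSeq (fun j => A j ω') (fun j => B j ω') i * x < t1 ω' ∧
              t2 ω' ≤ (alphaSeq (fun j => A j ω') (fun j => B j ω') i
                + prodSeq (fun j => A j ω') i) * x}
            (fun ω' => 1 / prodSeq (fun j => A j ω') i) ω)).toReal ∂μ := by
      refine integral_congr_ae ?_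
      filter_upwards [hgoodae] with ω hgood
      exact tsum_toReal_ofReal_nonneg fun i => pointwise_nonneg hp hq0 hgood i
    rw [h1, integral_toReal hGmeas.aemeasurable
      (ae_lt_top hGmeas (by rw [htotal]; exact ENNReal.ofReal_ne_top)),
      htotal, ENNReal.toReal_ofReal (hF0 x hx.le le_rfl)]
  exact hint.symm
end

section
/- In the Poisson model, P(H_{N_x} ≤ k) = e^{-x} + x Σ_{i=0}^{2^k - 1} |I_i^k| e^{-x (I_i^k)_+}, where (I_i^k) is the binary (p,q)-decomposition of [0,1] into 2^k intervals and (I)_+ denotes the right endpoint of I. -/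
open Finset

lemma expSeries_real (y : ℝ) : ∑' n : ℕ, y ^ n / n.factorial = Real.exp y := by
  rw [Real.exp_eq_exp_ℝ, NormedSpace.exp_eq_tsum_div]

lemma aux_summable_norm (c : ℕ → ℝ) (hb : ∀ n, |c n| ≤ 1) (y : ℝ) :
    Summable (fun n => ‖c n * y ^ n / n.factorial‖) := by
  apply Summable.of_nonneg_of_le (fun n => norm_nonneg _) (fun n => ?_)
    (Real.summable_pow_div_factorial |y|)
  have h1 : ‖c n * y ^ n / n.factorial‖ = |c n| * (|y| ^ n / n.factorial) := by
    rw [Real.norm_eq_abs, abs_div, abs_mul, abs_pow, Nat.abs_cast]; ring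
  rw [h1]
  calc |c n| * (|y| ^ n / n.factorial) ≤ 1 * (|y| ^ n / n.factorial) := by
        apply mul_le_mul_of_nonneg_right (hb n); positivity
    _ = |y| ^ n / n.factorial := one_mul _

lemma aux_summable (c : ℕ → ℝ) (hb : ∀ n, |c n| ≤ 1) (y : ℝ) :
    Summable (fun n => c n * y ^ n / n.factorial) :=
  (aux_summable_norm c hb y).of_norm

lemma aux_norm_summable (y : ℝ) : Summable (fun n : ℕ => ‖y ^ n / n.factorial‖) := by
  refine (Real.summable_pow_div_factorial |y|).congr fun n => ?_
  rw [Real.norm_eq_abs, abs_div, abs_pow, Nat.abs_cast]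

lemma aux_rec (p q : ℝ) (hpq : p + q = 1)
    (PH : ℕ → ℕ → ℝ)
    (hPH0 : ∀ k, PH 0 k = 1) (hPH1 : ∀ k, PH 1 k = 1)
    (hPHrec : ∀ n, 2 ≤ n → ∀ k, PH n (k + 1)
      = ∑ j ∈ range (n + 1),
          (n.choose j : ℝ) * p ^ j * q ^ (n - j) * PH (if j = 0 then n else j) k)
    (hb : ∀ k n, 0 ≤ PH n k ∧ PH n k ≤ 1)
    (k : ℕ) (x : ℝ) :
    ∑' n : ℕ, PH n (k+1) * x ^ n / n.factorial
      = (∑' n : ℕ, PH n k * (q*x) ^ n / n.factorial)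
        + Real.exp (q*x) * ((∑' n : ℕ, PH n k * (p*x) ^ n / n.factorial) - 1) := by
  set f : ℕ → ℝ := fun j => (if j = 0 then 0 else PH j k) * (p*x) ^ j / j.factorial with hf
  set g : ℕ → ℝ := fun m => (q*x) ^ m / m.factorial with hg
  have habs : ∀ n, |PH n k| ≤ 1 := fun n => abs_le.2 ⟨by linarith [(hb k n).1], (hb k n).2⟩
  have habs' : ∀ n, |(if n = 0 then 0 else PH n k)| ≤ 1 := by
    intro n; by_cases h : n = 0 <;> simp [h, habs n]
  have hsf : Summable fun n => ‖f n‖ := aux_summable_norm _ habs' (p*x)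
  have hsg : Summable fun n => ‖g n‖ := aux_norm_summable (q*x)
  -- termwise identity
  have hterm : ∀ n : ℕ, PH n (k+1) * x ^ n / n.factorial
      = PH n k * (q*x) ^ n / n.factorial + ∑ j ∈ range (n+1), f j * g (n - j) := by
    intro n
    match n with
    | 0 => simp [hf, hg, hPH0]
    | 1 =>
      simp only [Finset.sum_range_succ, Finset.sum_range_zero, hf, hg, hPH1]
      norm_num
      linear_combination -x * hpq
    | (m+2) =>
      set n := m + 2 with hn
      have h2n : 2 ≤ n := by omega
      rw [hPHrec n h2n k, Finset.sum_mul, Finset.sum_div, Finset.sum_range_succ' _ n,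
        Finset.sum_range_succ' _ n]
      have hzero : (n.choose 0 : ℝ) * p ^ 0 * q ^ (n - 0) * PH (if 0 = 0 then n else 0) k
          * x ^ n / n.factorial = PH n k * (q*x) ^ n / n.factorial := by
        simp [mul_pow]
        ring
      have hfzero : f 0 * g (n - 0) = 0 := by simp [hf]
      rw [hfzero, hzero, add_zero, add_comm]
      congr 1
      apply Finset.sum_congr rfl
      intro j hj
      have hjn : j + 1 ≤ n := by
        have := Finset.mem_range.1 hj; omega
      have hif : (if j + 1 = 0 then n else j + 1) = j + 1 := by simp
      rw [hif]
      have hx : x ^ (j+1) * x ^ (n - (j+1)) = x ^ n := by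
        rw [← pow_add]; congr 1; omega
      have key : ((n.choose (j+1) : ℕ) : ℝ) * (j+1).factorial * (n-(j+1)).factorial
          = n.factorial := by
        exact_mod_cast congrArg Nat.cast (Nat.choose_mul_factorial_mul_factorial hjn)
      have hckey : (n.choose (j+1) : ℝ) / n.factorial
          = 1 / ((j+1).factorial * (n-(j+1)).factorial) := by
        rw [div_eq_div_iff (by positivity) (by positivity), one_mul, ← key]
        ring
      show (n.choose (j+1) : ℝ) * p ^ (j+1) * q ^ (n-(j+1)) * PH (j+1) k * x ^ n / n.factorial
          = f (j+1) * g (n - (j+1))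
      simp only [hf, hg, if_neg (Nat.succ_ne_zero j)]
      calc (n.choose (j+1) : ℝ) * p ^ (j+1) * q ^ (n-(j+1)) * PH (j+1) k * x ^ n / n.factorial
          = PH (j+1) k * (p ^ (j+1) * x ^ (j+1)) * (q ^ (n-(j+1)) * x ^ (n-(j+1)))
            * ((n.choose (j+1) : ℝ) / n.factorial) := by rw [← hx]; ring
        _ = PH (j+1) k * (p ^ (j+1) * x ^ (j+1)) * (q ^ (n-(j+1)) * x ^ (n-(j+1)))
            * (1 / ((j+1).factorial * (n-(j+1)).factorial)) := by rw [hckey]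
        _ = PH (j+1) k * (p*x) ^ (j+1) / (j+1).factorial * ((q*x) ^ (n-(j+1)) / (n-(j+1)).factorial) := by
            rw [mul_pow, mul_pow]; ring
  -- now sum up
  calc ∑' n : ℕ, PH n (k+1) * x ^ n / n.factorial
      = ∑' n : ℕ, (PH n k * (q*x) ^ n / n.factorial + ∑ j ∈ range (n+1), f j * g (n - j)) :=
        tsum_congr hterm
    _ = (∑' n : ℕ, PH n k * (q*x) ^ n / n.factorial)
        + ∑' n : ℕ, ∑ j ∈ range (n+1), f j * g (n - j) := by
        apply Summable.tsum_add (aux_summable _ habs (q*x))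
        exact (summable_norm_sum_mul_range_of_summable_norm hsf hsg).of_norm
    _ = (∑' n : ℕ, PH n k * (q*x) ^ n / n.factorial) + (∑' j, f j) * (∑' m, g m) := by
        rw [tsum_mul_tsum_eq_tsum_sum_range_of_summable_norm hsf hsg]
    _ = (∑' n : ℕ, PH n k * (q*x) ^ n / n.factorial)
        + Real.exp (q*x) * ((∑' n : ℕ, PH n k * (p*x) ^ n / n.factorial) - 1) := by
        congr 1
        have hgsum : (∑' m, g m) = Real.exp (q*x) := expSeries_real (q*x)
        have hfsum : (∑' j, f j) = (∑' n : ℕ, PH n k * (p*x) ^ n / n.factorial) - 1 := by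
          have hfe : ∀ j : ℕ, f j = PH j k * (p*x) ^ j / j.factorial
              - (if j = 0 then (1:ℝ) else 0) := by
            intro j
            by_cases h : j = 0
            · subst h; simp [hf, hPH0]
            · simp [hf, h]
          rw [tsum_congr hfe, Summable.tsum_sub (aux_summable _ habs (p*x))
            ((hasSum_ite_eq 0 (1:ℝ)).summable), tsum_ite_eq 0 (fun _ => (1:ℝ))]
        rw [hgsum, hfsum]; ring


lemma aux_bounds (p q : ℝ) (hp : 0 ≤ p) (hq0 : 0 ≤ q) (hpq : p + q = 1)
    (PH : ℕ → ℕ → ℝ)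
    (hPH0 : ∀ k, PH 0 k = 1) (hPH1 : ∀ k, PH 1 k = 1)
    (hPHbase : ∀ n, 2 ≤ n → PH n 0 = 0)
    (hPHrec : ∀ n, 2 ≤ n → ∀ k, PH n (k + 1)
      = ∑ j ∈ range (n + 1),
          (n.choose j : ℝ) * p ^ j * q ^ (n - j) * PH (if j = 0 then n else j) k) :
    ∀ k n, 0 ≤ PH n k ∧ PH n k ≤ 1 := by
  intro k
  induction k with
  | zero =>
    intro n
    match n with
    | 0 => simp [hPH0]
    | 1 => simp [hPH1]
    | (m+2) => rw [hPHbase (m+2) (by omega)]; norm_num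
  | succ k ih =>
    intro n
    match n with
    | 0 => simp [hPH0]
    | 1 => simp [hPH1]
    | (m+2) =>
      rw [hPHrec (m+2) (by omega)]
      have hco : ∀ j ∈ range (m+2+1), 0 ≤ ((m+2).choose j : ℝ) * p ^ j * q ^ (m+2-j) := by
        intro j _; positivity
      have hsum : ∑ j ∈ range (m+2+1), ((m+2).choose j : ℝ) * p ^ j * q ^ (m+2-j) = 1 := by
        have h := add_pow p q (m+2)
        rw [hpq, one_pow] at h
        rw [h]
        apply Finset.sum_congr rfl
        intro j _; ring
      constructor
      · apply Finset.sum_nonneg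
        intro j hj
        exact mul_nonneg (hco j hj) (ih _).1
      · calc ∑ j ∈ range (m+2+1), ((m+2).choose j : ℝ) * p ^ j * q ^ (m+2-j)
              * PH (if j = 0 then m+2 else j) k
            ≤ ∑ j ∈ range (m+2+1), ((m+2).choose j : ℝ) * p ^ j * q ^ (m+2-j) := by
              apply Finset.sum_le_sum
              intro j hj
              calc ((m+2).choose j : ℝ) * p ^ j * q ^ (m+2-j) * PH (if j = 0 then m+2 else j) k
                  ≤ ((m+2).choose j : ℝ) * p ^ j * q ^ (m+2-j) * 1 :=
                    mul_le_mul_of_nonneg_left (ih _).2 (hco j hj)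
                _ = _ := mul_one _
          _ = 1 := hsum


lemma aux_scale (p q : ℝ) (hpq : p + q = 1)
    (ℓ r : ℕ → ℕ → ℝ)
    (hbase : ℓ 0 0 = 0 ∧ r 0 0 = 1)
    (hrec : ∀ n k : ℕ, k < 2 ^ (n + 1) →
      ℓ (n + 1) k = (if k = 0 then 0 else r (n + 1) (k - 1)) ∧
      r (n + 1) k = ℓ (n + 1) k
        + (if k % 2 = 0 then p else q) * (r n (k / 2) - ℓ n (k / 2))) :
    ∀ n : ℕ, (∀ j < 2 ^ n,
        (ℓ (n+1) j = p * ℓ n j ∧ r (n+1) j = p * r n j) ∧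
        (ℓ (n+1) (2^n + j) = p + q * ℓ n j ∧ r (n+1) (2^n + j) = p + q * r n j)) ∧
      r n (2 ^ n - 1) = 1 := by
  intro n
  induction n with
  | zero =>
    refine ⟨?_, hbase.2⟩
    intro j hj
    interval_cases j
    have h0 := hrec 0 0 (by norm_num)
    have h1 := hrec 0 1 (by norm_num)
    norm_num at h0 h1
    have l10 : ℓ 1 0 = 0 := h0.1
    have r10 : r 1 0 = p := by rw [h0.2, l10, hbase.1, hbase.2]; ring
    have l11 : ℓ 1 1 = p := by rw [h1.1, r10]
    have r11 : r 1 1 = p + q := by rw [h1.2, l11, hbase.1, hbase.2]; ring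
    refine ⟨⟨?_, ?_⟩, ?_, ?_⟩
    · rw [l10, hbase.1]; ring
    · rw [r10, hbase.2]; ring
    · show ℓ 1 1 = _
      rw [l11, hbase.1]; ring
    · show r 1 1 = _
      rw [r11, hbase.2]; ring
  | succ n IH =>
    obtain ⟨P, rlast⟩ := IH
    -- low half, by induction on j
    have low : ∀ j < 2 ^ (n+1), ℓ (n+2) j = p * ℓ (n+1) j ∧ r (n+2) j = p * r (n+1) j := by
      intro j
      induction j with
      | zero =>
        intro _
        have h2 := hrec (n+1) 0 (by positivity)
        have h1 := hrec n 0 (by positivity)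
        norm_num at h2 h1
        have hlp : ℓ (n+2) 0 = p * ℓ (n+1) 0 := by rw [h2.1, h1.1]; ring
        refine ⟨hlp, ?_⟩
        rw [h2.2, hlp, h1.1]
        ring
      | succ j ihj =>
        intro hj1
        have hj : j < 2 ^ (n+1) := by omega
        have ihj' := ihj hj
        have hl2 : ℓ (n+2) (j+1) = r (n+2) j := by
          simpa using (hrec (n+1) (j+1) (by omega)).1
        have hl1 : ℓ (n+1) (j+1) = r (n+1) j := by
          simpa using (hrec n (j+1) (by omega)).1
        have hlp : ℓ (n+2) (j+1) = p * ℓ (n+1) (j+1) := by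
          rw [hl2, hl1, ihj'.2]
        refine ⟨hlp, ?_⟩
        have h2 := (hrec (n+1) (j+1) (by omega)).2
        have h1 := (hrec n (j+1) (by omega)).2
        have hd := P ((j+1)/2) (by omega)
        rw [h2, h1, hlp, hd.1.1, hd.1.2]
        ring
    -- last right endpoint at level n+1
    have rlast1 : r (n+1) (2 ^ (n+1) - 1) = 1 := by
      have h : 2 ^ (n+1) - 1 = 2 ^ n + (2 ^ n - 1) := by
        have : 1 ≤ 2 ^ n := Nat.one_le_two_pow
        omega
      rw [h, (P (2^n - 1) (by have : 1 ≤ 2 ^ n := Nat.one_le_two_pow; omega)).2.2, rlast]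
      linarith
    -- high half
    have high : ∀ j < 2 ^ (n+1),
        ℓ (n+2) (2^(n+1) + j) = p + q * ℓ (n+1) j ∧
        r (n+2) (2^(n+1) + j) = p + q * r (n+1) j := by
      intro j
      induction j with
      | zero =>
        intro _
        have hlt : 2 ^ (n+1) + 0 < 2 ^ (n+2) := by
          have : 2 ^ (n+2) = 2 * 2 ^ (n+1) := by ring
          omega
        have hl2 : ℓ (n+2) (2^(n+1) + 0) = r (n+2) (2^(n+1) - 1) := by
          have := (hrec (n+1) (2^(n+1)+0) hlt).1
          rw [if_neg (by positivity)] at this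
          simpa using this
        have h1 := hrec n 0 (by positivity)
        norm_num at h1
        have hlp : ℓ (n+2) (2^(n+1)+0) = p + q * ℓ (n+1) 0 := by
          rw [hl2, (low (2^(n+1)-1) (by omega)).2, rlast1, h1.1]; ring
        refine ⟨hlp, ?_⟩
        have h2 := (hrec (n+1) (2^(n+1)+0) hlt).2
        have hmod : (2^(n+1)+0) % 2 = 0 := by omega
        have hdiv : (2^(n+1)+0) / 2 = 2 ^ n + 0 := by omega
        rw [hmod, hdiv] at h2
        norm_num at h2
        have hd := P 0 (by positivity)
        simp only [Nat.add_zero] at hlp hd ⊢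
        rw [h2, hlp, hd.2.1, hd.2.2, h1.2, h1.1]
        ring
      | succ j ihj =>
        intro hj1
        have hj : j < 2 ^ (n+1) := by omega
        have ihj' := ihj hj
        have hlt : 2 ^ (n+1) + (j+1) < 2 ^ (n+2) := by
          have : 2 ^ (n+2) = 2 * 2 ^ (n+1) := by ring
          omega
        have hl2 : ℓ (n+2) (2^(n+1) + (j+1)) = r (n+2) (2^(n+1) + j) := by
          have := (hrec (n+1) (2^(n+1)+(j+1)) hlt).1
          rw [if_neg (by positivity)] at this
          have he : 2^(n+1) + (j+1) - 1 = 2^(n+1) + j := by omega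
          rwa [he] at this
        have hl1 : ℓ (n+1) (j+1) = r (n+1) j := by
          simpa using (hrec n (j+1) (by omega)).1
        have hlp : ℓ (n+2) (2^(n+1)+(j+1)) = p + q * ℓ (n+1) (j+1) := by
          rw [hl2, ihj'.2, hl1]
        refine ⟨hlp, ?_⟩
        have h2 := (hrec (n+1) (2^(n+1)+(j+1)) hlt).2
        have hmod : (2^(n+1)+(j+1)) % 2 = (j+1) % 2 := by omega
        have hdiv : (2^(n+1)+(j+1)) / 2 = 2 ^ n + (j+1) / 2 := by omega
        rw [hmod, hdiv] at h2
        have h1 := (hrec n (j+1) (by omega)).2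
        have hd := P ((j+1)/2) (by omega)
        rw [h2, h1, hlp, hd.2.1, hd.2.2]
        ring
    exact ⟨fun j hj => ⟨low j hj, high j hj⟩, rlast1⟩


section
variable (p q : ℝ) (PH : ℕ → ℕ → ℝ) (ℓ r : ℕ → ℕ → ℝ)

lemma aux_main (hpq : p + q = 1)
    (hPH0 : ∀ k, PH 0 k = 1) (hPH1 : ∀ k, PH 1 k = 1)
    (hPHbase : ∀ n, 2 ≤ n → PH n 0 = 0)
    (hrec2 : ∀ (k : ℕ) (x : ℝ), ∑' n : ℕ, PH n (k+1) * x ^ n / n.factorial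
      = (∑' n : ℕ, PH n k * (q*x) ^ n / n.factorial)
        + Real.exp (q*x) * ((∑' n : ℕ, PH n k * (p*x) ^ n / n.factorial) - 1))
    (hscale : ∀ n : ℕ, (∀ j < 2 ^ n,
        (ℓ (n+1) j = p * ℓ n j ∧ r (n+1) j = p * r n j) ∧
        (ℓ (n+1) (2^n + j) = p + q * ℓ n j ∧ r (n+1) (2^n + j) = p + q * r n j)) ∧
      r n (2 ^ n - 1) = 1)
    (hbase : ℓ 0 0 = 0 ∧ r 0 0 = 1) :
    ∀ (k : ℕ) (x : ℝ), ∑' n : ℕ, PH n k * x ^ n / n.factorial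
      = 1 + x * ∑ i ∈ range (2 ^ k),
          (r k i - ℓ k i) * Real.exp (x * (1 - r k i)) := by
  intro k
  induction k with
  | zero =>
    intro x
    have hterm : ∀ n : ℕ, PH n 0 * x ^ n / n.factorial
        = (if n = 0 then (1:ℝ) else 0) + (if n = 1 then x else 0) := by
      intro n
      match n with
      | 0 => simp [hPH0]
      | 1 => simp [hPH1]
      | (m+2) => rw [hPHbase (m+2) (by omega)]; simp
    rw [tsum_congr hterm,
      Summable.tsum_add (hasSum_ite_eq 0 (1:ℝ)).summable (hasSum_ite_eq 1 x).summable,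
      tsum_ite_eq 0 (fun _ => (1:ℝ)), tsum_ite_eq 1 (fun _ => x)]
    simp [hbase.1, hbase.2]
  | succ k IH =>
    intro x
    rw [hrec2 k x, IH (q*x), IH (p*x)]
    have h2 : 2 ^ (k+1) = 2 ^ k + 2 ^ k := by ring
    rw [h2, Finset.sum_range_add]
    have hlow : ∀ i ∈ range (2^k),
        (r (k+1) i - ℓ (k+1) i) * Real.exp (x * (1 - r (k+1) i))
          = Real.exp (q*x) * (p * ((r k i - ℓ k i) * Real.exp ((p*x) * (1 - r k i)))) := by
      intro i hi
      obtain ⟨⟨hl, hr⟩, _⟩ := (hscale k).1 i (Finset.mem_range.1 hi)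
      rw [hl, hr]
      have hexp : Real.exp (x * (1 - p * r k i))
          = Real.exp (q*x) * Real.exp ((p*x) * (1 - r k i)) := by
        rw [← Real.exp_add]
        congr 1
        linear_combination -x * hpq
      rw [hexp]; ring
    have hhigh : ∀ i ∈ range (2^k),
        (r (k+1) (2^k + i) - ℓ (k+1) (2^k + i)) * Real.exp (x * (1 - r (k+1) (2^k + i)))
          = q * ((r k i - ℓ k i) * Real.exp ((q*x) * (1 - r k i))) := by
      intro i hi
      obtain ⟨_, hl, hr⟩ := (hscale k).1 i (Finset.mem_range.1 hi)
      rw [hl, hr]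
      have hexp : Real.exp (x * (1 - (p + q * r k i)))
          = Real.exp ((q*x) * (1 - r k i)) := by
        congr 1
        linear_combination -x * hpq
      rw [hexp]; ring
    rw [Finset.sum_congr rfl hlow, Finset.sum_congr rfl hhigh]
    simp only [← Finset.mul_sum]
    ring
end

/-- Poisson model for the distribution of the leader election cost: with
`PH n k = P(H_n ≤ k)` satisfying the distributional recurrence of the algorithm and
`(I_i^k)` the binary `(p,q)`-decomposition of `[0,1]` (endpoints `ℓ k i`, `r k i`),
for every `x > 0` and `k`,
`P(H_{N_x} ≤ k) = e^{-x} + x Σ_{i<2^k} |I_i^k| e^{-x (I_i^k)_+}`. -/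
theorem poisson_model_distribution_formula
    (p q : ℝ) (hp : 0 < p) (hp1 : p < 1) (hq : q = 1 - p)
    (PH : ℕ → ℕ → ℝ)
    (hPH0 : ∀ k, PH 0 k = 1) (hPH1 : ∀ k, PH 1 k = 1)
    (hPHbase : ∀ n, 2 ≤ n → PH n 0 = 0)
    (hPHrec : ∀ n, 2 ≤ n → ∀ k, PH n (k + 1)
      = ∑ j ∈ range (n + 1),
          (n.choose j : ℝ) * p ^ j * q ^ (n - j) * PH (if j = 0 then n else j) k)
    (ℓ r : ℕ → ℕ → ℝ)
    (hbase : ℓ 0 0 = 0 ∧ r 0 0 = 1)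
    (hrec : ∀ n k : ℕ, k < 2 ^ (n + 1) →
      ℓ (n + 1) k = (if k = 0 then 0 else r (n + 1) (k - 1)) ∧
      r (n + 1) k = ℓ (n + 1) k
        + (if k % 2 = 0 then p else q) * (r n (k / 2) - ℓ n (k / 2)))
    (x : ℝ) (hx : 0 < x) (k : ℕ) :
    ∑' n : ℕ, PH n k * x ^ n / n.factorial * Real.exp (-x)
      = Real.exp (-x)
        + x * ∑ i ∈ range (2 ^ k), (r k i - ℓ k i) * Real.exp (-(x * r k i)) := by
  have hpq : p + q = 1 := by rw [hq]; ring
  have hq0 : (0:ℝ) ≤ q := by rw [hq]; linarith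
  have hb := aux_bounds p q hp.le hq0 hpq PH hPH0 hPH1 hPHbase hPHrec
  have hscale := aux_scale p q hpq ℓ r hbase hrec
  have hrec2 := fun (k : ℕ) (y : ℝ) => aux_rec p q hpq PH hPH0 hPH1 hPHrec hb k y
  have hmain := aux_main p q PH ℓ r hpq hPH0 hPH1 hPHbase hrec2 hscale hbase k x
  calc ∑' n : ℕ, PH n k * x ^ n / n.factorial * Real.exp (-x)
      = (∑' n : ℕ, PH n k * x ^ n / n.factorial) * Real.exp (-x) := tsum_mul_right
    _ = (1 + x * ∑ i ∈ range (2 ^ k),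
          (r k i - ℓ k i) * Real.exp (x * (1 - r k i))) * Real.exp (-x) := by rw [hmain]
    _ = Real.exp (-x)
        + x * ∑ i ∈ range (2 ^ k), (r k i - ℓ k i) * Real.exp (-(x * r k i)) := by
      rw [add_mul, one_mul, mul_assoc, Finset.sum_mul]
      congr 1
      congr 1
      apply Finset.sum_congr rfl
      intro i _
      rw [mul_assoc, ← Real.exp_add]
      congr 2
      ring
end

section
/- For n ≥ 2 and k ∈ ℕ, P(H_n ≤ k) = n ∫_0^1 (1-t)^{n-1} dμ_k(t), where μ_k = Σ_{i=0}^{2^k - 1} |I_i^k| δ_{(I_i^k)_+} is the discrete probability measure putting mass |I_i^k| at the right endpoint of I_i^k. -/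
open Finset MeasureTheory

/-- Key binomial identity used in the inductive step. -/
private lemma key_binom (p q u : ℝ) (n : ℕ) (hn : 1 ≤ n) :
    ∑ j ∈ range (n + 1), (n.choose j : ℝ) * p ^ j * q ^ (n - j) *
        (if j = 0 then (n : ℝ) * u ^ (n - 1) else (j : ℝ) * u ^ (j - 1))
      = n * (p * (p * u + q) ^ (n - 1) + q ^ n * u ^ (n - 1)) := by
  rw [Finset.sum_range_succ']
  have h2 : (p * u + q) ^ (n - 1)
      = ∑ m ∈ range n, (p * u) ^ m * q ^ (n - 1 - m) * ((n - 1).choose m : ℝ) := by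
    rw [add_pow, show n - 1 + 1 = n from by omega]
  have hS : ∑ m ∈ range n,
      ((n.choose (m + 1) : ℝ) * p ^ (m + 1) * q ^ (n - (m + 1)) *
        (if m + 1 = 0 then (n : ℝ) * u ^ (n - 1) else ((m + 1 : ℕ) : ℝ) * u ^ (m + 1 - 1)))
      = n * (p * (p * u + q) ^ (n - 1)) := by
    rw [h2, Finset.mul_sum, Finset.mul_sum]
    refine Finset.sum_congr rfl fun m hm => ?_
    rw [if_neg (Nat.succ_ne_zero m), Nat.add_sub_cancel]
    have hc : (n : ℝ) * ((n - 1).choose m : ℝ) = (n.choose (m + 1) : ℝ) * ((m : ℝ) + 1) := by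
      have h := Nat.add_one_mul_choose_eq (n - 1) m
      have hn1 : n - 1 + 1 = n := by omega
      rw [hn1] at h
      exact_mod_cast congrArg (Nat.cast : ℕ → ℝ) h
    have hexp : n - (m + 1) = n - 1 - m := by omega
    rw [hexp, mul_pow]
    push_cast
    linear_combination (p ^ (m + 1) * u ^ m * q ^ (n - 1 - m)) * hc.symm
  rw [hS]
  norm_num
  ring

/-- Self-similarity of the binary `(p,q)`-partition: the level `k+1` partition restricted to
the lower (resp. upper) half is the level `k` partition scaled by `p` (resp. by `q`,
shifted by `p`); moreover the last right endpoint is `1`. -/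
private lemma selfsim_aux (p q : ℝ)
    (ℓ r : ℕ → ℕ → ℝ)
    (hbase : ℓ 0 0 = 0 ∧ r 0 0 = 1)
    (hpq : p + q = 1)
    (hrec : ∀ n k : ℕ, k < 2 ^ (n + 1) →
      ℓ (n + 1) k = (if k = 0 then 0 else r (n + 1) (k - 1)) ∧
      r (n + 1) k = ℓ (n + 1) k
        + (if k % 2 = 0 then p else q) * (r n (k / 2) - ℓ n (k / 2))) :
    ∀ k : ℕ,
      (∀ i < 2 ^ k, ℓ (k + 1) i = p * ℓ k i ∧ r (k + 1) i = p * r k i) ∧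
      (∀ i < 2 ^ k,
        ℓ (k + 1) (2 ^ k + i) = p + q * ℓ k i ∧ r (k + 1) (2 ^ k + i) = p + q * r k i) ∧
      r k (2 ^ k - 1) = 1 := by
  intro k
  induction k with
  | zero =>
    obtain ⟨e0l, e0r⟩ := hrec 0 0 (by norm_num)
    obtain ⟨e1l, e1r⟩ := hrec 0 1 (by norm_num)
    norm_num at e0l e0r e1l e1r
    refine ⟨?_, ?_, hbase.2⟩
    · intro i hi
      interval_cases i
      rw [e0r, e0l, hbase.1, hbase.2]
      norm_num
    · intro i hi
      interval_cases i
      norm_num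
      rw [e1r, e1l, e0r, e0l, hbase.1, hbase.2]
      constructor <;> ring
  | succ k IH =>
    obtain ⟨L, U, Rl⟩ := IH
    have hpos : 0 < (2 : ℕ) ^ k := by positivity
    have hpos1 : 0 < (2 : ℕ) ^ (k + 1) := by positivity
    have hpow : (2 : ℕ) ^ (k + 1) = 2 ^ k + 2 ^ k := by rw [pow_succ]; ring
    have hpow2 : (2 : ℕ) ^ (k + 2) = 2 ^ (k + 1) + 2 ^ (k + 1) := by rw [pow_succ]; ring
    have L' : ∀ i, i < 2 ^ (k + 1) →
        ℓ (k + 2) i = p * ℓ (k + 1) i ∧ r (k + 2) i = p * r (k + 1) i := by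
      intro i
      induction i with
      | zero =>
        intro _
        obtain ⟨e2l, e2r⟩ := hrec (k + 1) 0 (by positivity)
        obtain ⟨e1l, e1r⟩ := hrec k 0 (by positivity)
        norm_num at e2l e2r e1l e1r
        constructor
        · rw [e2l, e1l, mul_zero]
        · rw [e2r, e2l, e1l, e1r]
          ring
      | succ i IH2 =>
        intro hi
        have hi' : i + 1 < 2 ^ (k + 2) := by omega
        obtain ⟨e2l, e2r⟩ := hrec (k + 1) (i + 1) hi'
        obtain ⟨e1l, e1r⟩ := hrec k (i + 1) hi
        have hd : (i + 1) / 2 < 2 ^ k := by omega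
        obtain ⟨dl, dr⟩ := L _ hd
        obtain ⟨pl, pr⟩ := IH2 (by omega)
        rw [if_neg (Nat.succ_ne_zero i), Nat.add_sub_cancel] at e2l e1l
        constructor
        · rw [e2l, pr, e1l]
        · rw [e2r, e2l, pr, e1r, e1l, dl, dr]
          ring
    have Rl' : r (k + 1) (2 ^ (k + 1) - 1) = 1 := by
      have h := (U (2 ^ k - 1) (by omega)).2
      have heq : 2 ^ k + (2 ^ k - 1) = 2 ^ (k + 1) - 1 := by omega
      rw [heq] at h
      rw [h, Rl, mul_one, hpq]
    have U' : ∀ i, i < 2 ^ (k + 1) →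
        ℓ (k + 2) (2 ^ (k + 1) + i) = p + q * ℓ (k + 1) i ∧
        r (k + 2) (2 ^ (k + 1) + i) = p + q * r (k + 1) i := by
      intro i
      induction i with
      | zero =>
        intro _
        simp only [Nat.add_zero]
        obtain ⟨e2l, e2r⟩ := hrec (k + 1) (2 ^ (k + 1)) (by omega)
        simp only [show k + 1 + 1 = k + 2 from rfl] at e2l e2r
        rw [if_neg (by omega : (2 : ℕ) ^ (k + 1) ≠ 0)] at e2l
        obtain ⟨f2l, f2r⟩ := L' (2 ^ (k + 1) - 1) (by omega)
        have hmod : 2 ^ (k + 1) % 2 = 0 := by omega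
        have hdiv : 2 ^ (k + 1) / 2 = 2 ^ k := by omega
        rw [if_pos hmod, hdiv] at e2r
        obtain ⟨g2l, g2r⟩ := U 0 hpos
        simp only [Nat.add_zero] at g2l g2r
        obtain ⟨e1l, e1r⟩ := hrec k 0 (by positivity)
        norm_num at e1l e1r
        constructor
        · rw [e2l, f2r, Rl', e1l, mul_one, mul_zero, add_zero]
        · rw [e2r, e2l, f2r, Rl', g2l, g2r, e1r, e1l]
          ring
      | succ i IH2 =>
        intro hi
        have hidx : 2 ^ (k + 1) + (i + 1) < 2 ^ (k + 2) := by omega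
        obtain ⟨e2l, e2r⟩ := hrec (k + 1) (2 ^ (k + 1) + (i + 1)) hidx
        simp only [show k + 1 + 1 = k + 2 from rfl] at e2l e2r
        rw [if_neg (by omega : 2 ^ (k + 1) + (i + 1) ≠ 0)] at e2l
        have hsub : 2 ^ (k + 1) + (i + 1) - 1 = 2 ^ (k + 1) + i := by omega
        rw [hsub] at e2l
        obtain ⟨pl, pr⟩ := IH2 (by omega)
        obtain ⟨e1l, e1r⟩ := hrec k (i + 1) hi
        rw [if_neg (Nat.succ_ne_zero i), Nat.add_sub_cancel] at e1l
        have hd2 : (2 ^ (k + 1) + (i + 1)) / 2 = 2 ^ k + (i + 1) / 2 := by omega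
        have hm2 : (2 ^ (k + 1) + (i + 1)) % 2 = (i + 1) % 2 := by omega
        rw [hd2, hm2] at e2r
        have hd : (i + 1) / 2 < 2 ^ k := by omega
        obtain ⟨g2l, g2r⟩ := U ((i + 1) / 2) hd
        constructor
        · rw [e2l, pr, e1l]
        · rw [e2r, e2l, pr, e1r, e1l, g2l, g2r]
          ring
    exact ⟨L', U', Rl'⟩

/-- Exact distribution of the leader election cost: for `n ≥ 2` and `k ∈ ℕ`,
`P(H_n ≤ k) = n ∫_0^1 (1-t)^{n-1} dμ_k(t)`, where
`μ_k = Σ_{i<2^k} |I_i^k| δ_{(I_i^k)_+}` is the discrete probability measure attached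
to the binary `(p,q)`-decomposition of `[0,1]`. -/
theorem cost_distribution_exact
    (p q : ℝ) (hp : 0 < p) (hp1 : p < 1) (hq : q = 1 - p)
    (PH : ℕ → ℕ → ℝ)
    (hPH0 : ∀ k, PH 0 k = 1) (hPH1 : ∀ k, PH 1 k = 1)
    (hPHbase : ∀ n, 2 ≤ n → PH n 0 = 0)
    (hPHrec : ∀ n, 2 ≤ n → ∀ k, PH n (k + 1)
      = ∑ j ∈ range (n + 1),
          (n.choose j : ℝ) * p ^ j * q ^ (n - j) * PH (if j = 0 then n else j) k)
    (ℓ r : ℕ → ℕ → ℝ)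
    (hbase : ℓ 0 0 = 0 ∧ r 0 0 = 1)
    (hrec : ∀ n k : ℕ, k < 2 ^ (n + 1) →
      ℓ (n + 1) k = (if k = 0 then 0 else r (n + 1) (k - 1)) ∧
      r (n + 1) k = ℓ (n + 1) k
        + (if k % 2 = 0 then p else q) * (r n (k / 2) - ℓ n (k / 2)))
    (n : ℕ) (hn : 2 ≤ n) (k : ℕ) :
    PH n k = n * ∫ t, (1 - t) ^ (n - 1)
      ∂(∑ i ∈ range (2 ^ k),
          ENNReal.ofReal (r k i - ℓ k i) • Measure.dirac (r k i)) := by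
  have hq0 : 0 < q := by rw [hq]; linarith
  have hpq : p + q = 1 := by rw [hq]; ring
  have sim := selfsim_aux p q ℓ r hbase hpq hrec
  -- lengths are nonnegative
  have nonneg : ∀ k, ∀ i < 2 ^ k, (0 : ℝ) ≤ r k i - ℓ k i := by
    intro k
    induction k with
    | zero =>
      intro i hi
      interval_cases i
      rw [hbase.1, hbase.2]
      norm_num
    | succ k IH =>
      intro i hi
      have hpow : (2 : ℕ) ^ (k + 1) = 2 ^ k + 2 ^ k := by rw [pow_succ]; ring
      rcases lt_or_ge i (2 ^ k) with h | h
      · obtain ⟨l1, r1⟩ := (sim k).1 i h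
        rw [l1, r1, ← mul_sub]
        exact mul_nonneg hp.le (IH i h)
      · obtain ⟨m, rfl, hm⟩ : ∃ m, i = 2 ^ k + m ∧ m < 2 ^ k := ⟨i - 2 ^ k, by omega, by omega⟩
        obtain ⟨l2, r2⟩ := (sim k).2.1 m hm
        rw [l2, r2]
        have e : p + q * r k m - (p + q * ℓ k m) = q * (r k m - ℓ k m) := by ring
        rw [e]
        exact mul_nonneg hq0.le (IH m hm)
  -- total length is 1
  have total : ∀ k, ∑ i ∈ range (2 ^ k), (r k i - ℓ k i) = 1 := by
    intro k
    induction k with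
    | zero => simp [hbase.1, hbase.2]
    | succ k IH =>
      have hpow : (2 : ℕ) ^ (k + 1) = 2 ^ k + 2 ^ k := by rw [pow_succ]; ring
      rw [hpow, Finset.sum_range_add]
      have e1 : ∀ i ∈ range (2 ^ k),
          r (k + 1) i - ℓ (k + 1) i = p * (r k i - ℓ k i) := by
        intro i hi
        obtain ⟨l1, r1⟩ := (sim k).1 i (mem_range.mp hi)
        rw [l1, r1]; ring
      have e2 : ∀ i ∈ range (2 ^ k),
          r (k + 1) (2 ^ k + i) - ℓ (k + 1) (2 ^ k + i) = q * (r k i - ℓ k i) := by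
        intro i hi
        obtain ⟨l2, r2⟩ := (sim k).2.1 i (mem_range.mp hi)
        rw [l2, r2]; ring
      rw [Finset.sum_congr rfl e1, Finset.sum_congr rfl e2, ← Finset.mul_sum,
        ← Finset.mul_sum, IH, mul_one, mul_one, hpq]
  -- the main combinatorial identity
  have main : ∀ k, ∀ n, 1 ≤ n →
      PH n k = n * ∑ i ∈ range (2 ^ k), (r k i - ℓ k i) * (1 - r k i) ^ (n - 1) := by
    intro k
    induction k with
    | zero =>
      intro n hn1
      simp only [pow_zero]
      rw [Finset.sum_range_one, hbase.1, hbase.2, sub_zero, sub_self]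
      rcases eq_or_lt_of_le hn1 with h1 | h2
      · rw [← h1, hPH1]
        norm_num
      · rw [hPHbase n h2, zero_pow (by omega : n - 1 ≠ 0)]
        ring
    | succ k IH =>
      intro n hn1
      rcases eq_or_lt_of_le hn1 with h1 | h2
      · rw [← h1, hPH1]
        have e : ∀ i ∈ range (2 ^ (k + 1)),
            (r (k + 1) i - ℓ (k + 1) i) * (1 - r (k + 1) i) ^ (1 - 1)
              = r (k + 1) i - ℓ (k + 1) i := by
          intro i _
          rw [Nat.sub_self, pow_zero, mul_one]
        rw [Finset.sum_congr rfl e, total (k + 1), Nat.cast_one, mul_one]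
      · have hn2 : 2 ≤ n := h2
        rw [hPHrec n hn2 k]
        have hterm : ∀ j ∈ range (n + 1),
            (n.choose j : ℝ) * p ^ j * q ^ (n - j) * PH (if j = 0 then n else j) k
            = ∑ i ∈ range (2 ^ k), (r k i - ℓ k i) *
                ((n.choose j : ℝ) * p ^ j * q ^ (n - j) *
                  (if j = 0 then (n : ℝ) * (1 - r k i) ^ (n - 1)
                   else (j : ℝ) * (1 - r k i) ^ (j - 1))) := by
          intro j _
          rcases Nat.eq_zero_or_pos j with rfl | hj1
          · rw [if_pos rfl, IH n hn1, Finset.mul_sum, Finset.mul_sum]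
            refine Finset.sum_congr rfl fun i _ => ?_
            rw [if_pos rfl]; ring
          · rw [if_neg (by omega : j ≠ 0), IH j hj1, Finset.mul_sum, Finset.mul_sum]
            refine Finset.sum_congr rfl fun i _ => ?_
            rw [if_neg (by omega : j ≠ 0)]; ring
        rw [Finset.sum_congr rfl hterm, Finset.sum_comm]
        have inner : ∀ i ∈ range (2 ^ k),
            (∑ j ∈ range (n + 1), (r k i - ℓ k i) *
                ((n.choose j : ℝ) * p ^ j * q ^ (n - j) *
                  (if j = 0 then (n : ℝ) * (1 - r k i) ^ (n - 1)
                   else (j : ℝ) * (1 - r k i) ^ (j - 1))))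
            = (r k i - ℓ k i) * ((n : ℝ) *
                (p * (p * (1 - r k i) + q) ^ (n - 1) + q ^ n * (1 - r k i) ^ (n - 1))) := by
          intro i _
          rw [← Finset.mul_sum, key_binom p q (1 - r k i) n hn1]
        rw [Finset.sum_congr rfl inner]
        have hpow : (2 : ℕ) ^ (k + 1) = 2 ^ k + 2 ^ k := by rw [pow_succ]; ring
        rw [hpow, Finset.sum_range_add]
        have e1 : ∀ i ∈ range (2 ^ k),
            (r (k + 1) i - ℓ (k + 1) i) * (1 - r (k + 1) i) ^ (n - 1)
              = p * (r k i - ℓ k i) * (p * (1 - r k i) + q) ^ (n - 1) := by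
          intro i hi
          obtain ⟨l1, r1⟩ := (sim k).1 i (mem_range.mp hi)
          rw [l1, r1]
          have e : (1 : ℝ) - p * r k i = p * (1 - r k i) + q := by rw [hq]; ring
          rw [e]; ring
        have e2 : ∀ i ∈ range (2 ^ k),
            (r (k + 1) (2 ^ k + i) - ℓ (k + 1) (2 ^ k + i))
                * (1 - r (k + 1) (2 ^ k + i)) ^ (n - 1)
              = q * (r k i - ℓ k i) * (q ^ (n - 1) * (1 - r k i) ^ (n - 1)) := by
          intro i hi
          obtain ⟨l2, r2⟩ := (sim k).2.1 i (mem_range.mp hi)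
          rw [l2, r2]
          have e : (1 : ℝ) - (p + q * r k i) = q * (1 - r k i) := by rw [hq]; ring
          rw [e, mul_pow]; ring
        rw [Finset.sum_congr rfl e1, Finset.sum_congr rfl e2, ← Finset.sum_add_distrib,
          Finset.mul_sum]
        refine Finset.sum_congr rfl fun i hi => ?_
        have hqn : q ^ n = q ^ (n - 1) * q := by
          conv_lhs => rw [show n = n - 1 + 1 by omega]
          exact pow_succ q (n - 1)
        rw [hqn]; ring
  -- evaluate the integral against the discrete measure
  have hmeas : Measurable fun t : ℝ => (1 - t) ^ (n - 1) :=
    (measurable_const.sub measurable_id).pow_const _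
  have hint : ∀ a : ℝ, Integrable (fun t : ℝ => (1 - t) ^ (n - 1)) (Measure.dirac a) := by
    intro a
    refine ⟨hmeas.aestronglyMeasurable, ?_⟩
    rw [HasFiniteIntegral, lintegral_dirac]
    exact ENNReal.coe_lt_top
  rw [integral_finset_sum_measure
    (fun i _ => (hint (r k i)).smul_measure ENNReal.ofReal_ne_top)]
  have hval : ∀ i ∈ range (2 ^ k),
      (∫ t, (1 - t) ^ (n - 1)
          ∂(ENNReal.ofReal (r k i - ℓ k i) • Measure.dirac (r k i)))
        = (r k i - ℓ k i) * (1 - r k i) ^ (n - 1) := by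
    intro i hi
    rw [integral_smul_measure, integral_dirac,
      ENNReal.toReal_ofReal (nonneg k i (mem_range.mp hi)), smul_eq_mul]
  rw [Finset.sum_congr rfl hval]
  exact main k n (by omega)
end
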